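/- arXiv:2602.07235 — 7 statements merged into one kernel-verified Lean document; each statement's English description precedes it below -/
import Mathlib

section
/- Let N ≥ 2, let M = N(N−1)/2 be the number of 2-element subsets of Fin N, and consider all distortion-free pair-assignment schemes (W, p, σ) on Fin N. For such a scheme define the marginal μ(x) = ∑_{w ∈ W} p(w) · (1/M) · |{P : σ(P,w) = x}| for x ∈ Fin N, the rows ν_w(x) = (1/M) · |{P : σ(P,w) = x}|, and the mutual-information value I(W,p,σ) = ∑_{x} negMulLog(μ(x)) − ∑_{w} p(w) · ∑_{x} negMulLog(ν_w(x)). Then the set { I(W,p,σ) : (W,p,σ) distortion-free } has greatest element log N − ∑_{t=1}^{N−1} negMulLog(t/M); that is, every distortion-free scheme satisfies I(W,p,σ) ≤ log N − ∑_{t=1}^{N−1} negMulLog(t/M), and some distortion-free scheme attains this value. -/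
open Real Finset

/-- A pair-assignment scheme on `Fin N`: a finite nonempty type `W` of side information,
a probability mass function `p` on `W`, and a selection map `σ` assigning to each
2-element subset `P` of `Fin N` and each `w : W` an element of `P`. -/
structure PairScheme (N : ℕ) where
  W : Type
  [fintypeW : Fintype W]
  [nonemptyW : Nonempty W]
  p : W → ℝ
  σ : {P : Finset (Fin N) // P.card = 2} → W → Fin N
  p_nonneg : ∀ w, 0 ≤ p w
  p_sum_one : ∑ w, p w = 1
  σ_mem : ∀ P w, σ P w ∈ P.1

attribute [instance] PairScheme.fintypeW PairScheme.nonemptyW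

/-- The scheme is distortion-free: for every 2-element subset `P` and every `x ∈ P`,
the total `p`-mass of the side informations selecting `x` is `1/2`. -/
def PairScheme.DistortionFree {N : ℕ} (S : PairScheme N) : Prop :=
  ∀ (P : {P : Finset (Fin N) // P.card = 2}) (x : Fin N), x ∈ P.1 →
    ∑ w ∈ Finset.univ.filter (fun w => S.σ P w = x), S.p w = 1 / 2

/-- Row distribution `ν_w(x) = (1/M) · |{P : σ(P,w) = x}|`. -/
noncomputable def PairScheme.nu {N : ℕ} (S : PairScheme N) (M : ℕ) (w : S.W) (x : Fin N) : ℝ :=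
  (1 / (M : ℝ)) *
    ((Finset.univ.filter (fun P : {P : Finset (Fin N) // P.card = 2} => S.σ P w = x)).card : ℝ)

/-- Marginal distribution `μ(x) = ∑_w p(w) · ν_w(x)`. -/
noncomputable def PairScheme.mu {N : ℕ} (S : PairScheme N) (M : ℕ) (x : Fin N) : ℝ :=
  ∑ w, S.p w * S.nu M w x

/-- The mutual-information value
`I(W,p,σ) = ∑_x negMulLog(μ(x)) − ∑_w p(w) · ∑_x negMulLog(ν_w(x))`. -/
noncomputable def PairScheme.mutualInfo {N : ℕ} (S : PairScheme N) (M : ℕ) : ℝ :=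
  (∑ x, Real.negMulLog (S.mu M x)) - ∑ w, S.p w * ∑ x, Real.negMulLog (S.nu M w x)

noncomputable def flog (n : ℕ) : ℝ := (n : ℝ) * Real.log n

noncomputable def Dlog (m : ℕ) : ℝ := flog (m + 1) + flog (m - 1) - 2 * flog m

@[simp] lemma flog_zero : flog 0 = 0 := by simp [flog]

@[simp] lemma flog_one : flog 1 = 0 := by simp [flog]

lemma Dlog_nonneg {m : ℕ} (hm : 1 ≤ m) : 0 ≤ Dlog m := by
  obtain ⟨k, rfl⟩ : ∃ k, m = k + 1 := ⟨m - 1, by omega⟩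
  have h := Real.concaveOn_negMulLog.2 (Set.mem_Ici.2 (Nat.cast_nonneg k))
    (Set.mem_Ici.2 (by positivity : (0:ℝ) ≤ (k:ℝ)+2))
    (show (0:ℝ) ≤ 1/2 by norm_num) (show (0:ℝ) ≤ 1/2 by norm_num)
    (by norm_num : (1:ℝ)/2 + 1/2 = 1)
  have hmid : ((1:ℝ)/2) • (k : ℝ) + ((1:ℝ)/2) • ((k:ℝ) + 2) = ((k:ℝ) + 1) := by
    rw [smul_eq_mul, smul_eq_mul]; ring
  rw [hmid] at h
  simp only [smul_eq_mul, Real.negMulLog] at h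
  simp only [Dlog, flog, Nat.add_sub_cancel]
  push_cast
  have e : ((k:ℝ) + 1 + 1) = (k:ℝ) + 2 := by ring
  rw [e]
  linarith [h]

lemma telescope_Dlog (n : ℕ) :
    ∑ m ∈ range n, Dlog (m + 1) = flog (n + 1) - flog n := by
  have h := Finset.sum_range_sub (fun i => flog (i + 1) - flog i) n
  have heq : ∀ m ∈ range n, Dlog (m + 1) = (fun i => flog (i + 1) - flog i) (m + 1)
      - (fun i => flog (i + 1) - flog i) m := by
    intro m _; simp only [Dlog, Nat.add_sub_cancel]; ring
  rw [Finset.sum_congr rfl heq, h]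
  simp

lemma flog_eq_sum {K n : ℕ} (hn : n ≤ K + 1) :
    flog n = ∑ m ∈ range K, Dlog (m + 1) * ((n - (m + 1) : ℕ) : ℝ) := by
  induction n with
  | zero => simp
  | succ n ih =>
    have hnK : n ≤ K := by omega
    have ih' := ih (by omega)
    have key : ∑ m ∈ range K, Dlog (m + 1) * ((n + 1 - (m + 1) : ℕ) : ℝ)
        = (∑ m ∈ range K, Dlog (m + 1) * ((n - (m + 1) : ℕ) : ℝ))
          + ∑ m ∈ range K, (if m < n then Dlog (m + 1) else 0) := by
      rw [← Finset.sum_add_distrib]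
      refine Finset.sum_congr rfl fun m _ => ?_
      rcases lt_or_ge m n with h | h
      · rw [if_pos h, show n + 1 - (m+1) = (n - (m+1)) + 1 by omega]
        push_cast; ring
      · rw [if_neg (by omega), show n + 1 - (m+1) = 0 by omega,
          show n - (m+1) = 0 by omega]
        simp
    have key2 : ∑ m ∈ range K, (if m < n then Dlog (m + 1) else 0)
        = ∑ m ∈ range n, Dlog (m + 1) := by
      rw [← Finset.sum_filter]
      congr 1
      ext m; simp only [mem_filter, mem_range]; omega
    rw [key, key2, telescope_Dlog, ← ih']
    ring

lemma choose_ineq (N k m : ℕ) (hk : k ≤ N) (hm : 1 ≤ m) :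
    N.choose 2 ≤ (N - k).choose 2 + k * m + ∑ t ∈ range N, (t - m) := by
  have h1 : ∑ t ∈ range (N - k), t + ∑ t ∈ Ico (N - k) N, t = ∑ t ∈ range N, t := by
    rw [range_eq_Ico, range_eq_Ico]
    exact Finset.sum_Ico_consecutive (fun t : ℕ => t) (Nat.zero_le _) (Nat.sub_le _ _)
  have hc : ∀ n : ℕ, ∑ t ∈ range n, t = n.choose 2 := by
    intro n; rw [Finset.sum_range_id, Nat.choose_two_right]
  have h2 : ∑ t ∈ Ico (N - k) N, t ≤ (∑ t ∈ Ico (N - k) N, (t - m)) + k * m := by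
    calc ∑ t ∈ Ico (N - k) N, t ≤ ∑ t ∈ Ico (N - k) N, ((t - m) + m) :=
          Finset.sum_le_sum fun t _ => by omega
      _ = (∑ t ∈ Ico (N - k) N, (t - m)) + (N - (N - k)) * m := by
          rw [Finset.sum_add_distrib, Finset.sum_const, Nat.card_Ico, smul_eq_mul]
      _ = (∑ t ∈ Ico (N - k) N, (t - m)) + k * m := by rw [Nat.sub_sub_self hk]
  have h3 : ∑ t ∈ Ico (N - k) N, (t - m) ≤ ∑ t ∈ range N, (t - m) := by
    apply Finset.sum_le_sum_of_subset
    rw [range_eq_Ico]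
    exact Finset.Ico_subset_Ico (Nat.zero_le _) le_rfl
  have := hc N; have := hc (N - k)
  omega

/-- The pair type. -/
abbrev PT (N : ℕ) := {P : Finset (Fin N) // P.card = 2}

lemma card_PT (N : ℕ) : Fintype.card (PT N) = N.choose 2 := by
  rw [Fintype.card_finset_len, Fintype.card_fin]

lemma fiber_card_sum (N : ℕ) (F : PT N → Fin N) :
    ∑ x : Fin N, (univ.filter fun P => F P = x).card = N.choose 2 := by
  rw [← card_PT N, ← Finset.card_univ]
  exact (Finset.card_eq_sum_card_fiberwise (f := F) (s := univ) (t := univ)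
    fun P _ => Finset.mem_univ (F P)).symm

lemma fiber_constraint (N m : ℕ) (hm : 1 ≤ m) (F : PT N → Fin N) (hF : ∀ P, F P ∈ P.1) :
    ∑ x : Fin N, ((univ.filter fun P => F P = x).card - m) ≤ ∑ t ∈ range N, (t - m) := by
  classical
  set c : Fin N → ℕ := fun x => (univ.filter fun P => F P = x).card with hc
  set S : Finset (Fin N) := univ.filter fun x => m < c x with hS
  set k := S.card with hk
  have hkN : k ≤ N := by
    calc k ≤ Fintype.card (Fin N) := Finset.card_le_univ S
      _ = N := Fintype.card_fin N
  -- sum over S of c equals card of pairs selected into S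
  have hsum_S : ∑ x ∈ S, c x = (univ.filter fun P : PT N => F P ∈ S).card := by
    rw [Finset.card_eq_sum_card_fiberwise
      (s := univ.filter fun P : PT N => F P ∈ S) (f := F) (t := S) (fun P hP => (Finset.mem_filter.1 hP).2)]
    refine Finset.sum_congr rfl fun x hx => ?_
    rw [Finset.filter_filter]
    show (Finset.filter (fun P : PT N => F P = x) univ).card = _
    congr 1
    ext P
    simp only [Finset.mem_filter, Finset.mem_univ, true_and]
    constructor
    · intro h; exact ⟨by rw [h]; exact hx, h⟩
    · exact fun h => h.2
  -- pairs inside the complement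
  have hPsub : (univ.filter fun P : PT N => P.1 ⊆ Sᶜ).card = (N - k).choose 2 := by
    have hcompl : (Sᶜ : Finset (Fin N)).card = N - k := by
      rw [Finset.card_compl, Fintype.card_fin]
    have hb : (univ.filter fun P : PT N => P.1 ⊆ Sᶜ).card
        = (Finset.powersetCard 2 (Sᶜ : Finset (Fin N))).card := by
      refine Finset.card_bij' (fun P _ => P.1)
        (fun Q hQ => (⟨Q, (Finset.mem_powersetCard.1 hQ).2⟩ : PT N)) ?_ ?_
        (fun P hP => rfl) (fun Q hQ => rfl)
      · intro P hP
        rw [Finset.mem_powersetCard]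
        exact ⟨(Finset.mem_filter.1 hP).2, P.2⟩
      · intro Q hQ
        simp only [Finset.mem_filter, Finset.mem_univ, true_and]
        exact (Finset.mem_powersetCard.1 hQ).1
    rw [hb, Finset.card_powersetCard, hcompl]
  have hdisj : (univ.filter fun P : PT N => F P ∈ S).card + (N - k).choose 2 ≤ N.choose 2 := by
    rw [← hPsub, ← card_PT N, ← Finset.card_univ]
    rw [← Finset.card_union_of_disjoint]
    · apply Finset.card_le_univ
    · rw [Finset.disjoint_filter]
      intro P _ hP hP2
      exact (Finset.mem_compl.1 (hP2 (hF P))) hP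
  -- left side reduces to sum over S
  have hL : ∑ x : Fin N, (c x - m) = ∑ x ∈ S, (c x - m) :=
    (Finset.sum_filter_of_ne (fun x _ h => by omega)).symm
  have hL2 : ∑ x ∈ S, (c x - m) + k * m = ∑ x ∈ S, c x := by
    have h : ∑ x ∈ S, ((c x - m) + m) = ∑ x ∈ S, c x := by
      refine Finset.sum_congr rfl fun x hx => ?_
      have := (Finset.mem_filter.1 hx).2
      omega
    rw [Finset.sum_add_distrib, Finset.sum_const, smul_eq_mul] at h
    exact h
  have hchoose := choose_ineq N k m hkN hm
  rw [hL]
  omega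

lemma row_flog_bound {N : ℕ} (hN : 2 ≤ N) (F : PT N → Fin N) (hF : ∀ P, F P ∈ P.1) :
    ∑ x : Fin N, flog ((univ.filter fun P => F P = x).card)
      ≤ ∑ t ∈ range N, flog t := by
  classical
  set c : Fin N → ℕ := fun x => (univ.filter fun P => F P = x).card with hc
  set K := N.choose 2 with hK
  have hcsum : ∑ x : Fin N, c x = K := fiber_card_sum N F
  have hcle : ∀ x, c x ≤ K := by
    intro x
    rw [← hcsum]
    exact Finset.single_le_sum (fun y _ => Nat.zero_le _) (Finset.mem_univ x)
  have htle : ∀ t ∈ range N, t ≤ K + 1 := by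
    intro t ht
    have ht' := Finset.mem_range.1 ht
    have h1 : 2 * (N - 1) ≤ N * (N - 1) := Nat.mul_le_mul_right _ hN
    have h2 : 2 * (N - 1) / 2 ≤ N * (N - 1) / 2 := Nat.div_le_div_right h1
    rw [Nat.mul_div_cancel_left _ (by norm_num : 0 < 2)] at h2
    have := Nat.choose_two_right N
    omega
  calc ∑ x : Fin N, flog (c x)
      = ∑ x : Fin N, ∑ m ∈ range K, Dlog (m+1) * ((c x - (m+1) : ℕ) : ℝ) :=
        Finset.sum_congr rfl fun x _ => flog_eq_sum (by have := hcle x; omega)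
    _ = ∑ m ∈ range K, Dlog (m+1) * ((∑ x : Fin N, (c x - (m+1)) : ℕ) : ℝ) := by
        rw [Finset.sum_comm]
        refine Finset.sum_congr rfl fun m _ => ?_
        rw [← Finset.mul_sum, Nat.cast_sum]
    _ ≤ ∑ m ∈ range K, Dlog (m+1) * ((∑ t ∈ range N, (t - (m+1)) : ℕ) : ℝ) := by
        refine Finset.sum_le_sum fun m _ => ?_
        apply mul_le_mul_of_nonneg_left _ (Dlog_nonneg (by omega))
        exact_mod_cast Nat.cast_le.2 (fiber_constraint N (m+1) (by omega) F hF)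
    _ = ∑ t ∈ range N, ∑ m ∈ range K, Dlog (m+1) * ((t - (m+1) : ℕ) : ℝ) := by
        rw [Finset.sum_comm]
        refine Finset.sum_congr rfl fun m _ => ?_
        rw [← Finset.mul_sum, Nat.cast_sum]
    _ = ∑ t ∈ range N, flog t :=
        Finset.sum_congr rfl fun t ht => (flog_eq_sum (htle t ht)).symm

lemma negMulLog_nat_div (c : ℕ) {M : ℝ} (hM : 0 < M) :
    Real.negMulLog ((c : ℝ) / M) = (c : ℝ) / M * Real.log M - (1 / M) * flog c := by
  rcases Nat.eq_zero_or_pos c with rfl | hc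
  · simp
  · have hc' : (0:ℝ) < c := by exact_mod_cast hc
    rw [Real.negMulLog, Real.log_div (ne_of_gt hc') (ne_of_gt hM), flog]
    field_simp
    ring

lemma entropy_le_log (n : ℕ) (hn : 0 < n) (q : Fin n → ℝ) (hq : ∀ i, 0 ≤ q i)
    (hsum : ∑ i, q i = 1) : ∑ i, Real.negMulLog (q i) ≤ Real.log n := by
  have hn' : (0:ℝ) < n := by exact_mod_cast hn
  have h := Real.concaveOn_negMulLog.le_map_sum (t := (univ : Finset (Fin n)))
    (w := fun _ => (n:ℝ)⁻¹) (p := q)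
    (fun i _ => by positivity)
    (by simp [Finset.card_univ]; field_simp)
    (fun i _ => Set.mem_Ici.2 (hq i))
  have hinner : ∑ i, (n:ℝ)⁻¹ • q i = (n:ℝ)⁻¹ := by
    simp only [smul_eq_mul]
    rw [← Finset.mul_sum, hsum, mul_one]
  rw [hinner] at h
  have hval : Real.negMulLog ((n:ℝ)⁻¹) = (n:ℝ)⁻¹ * Real.log n := by
    rw [Real.negMulLog, Real.log_inv]
    ring
  rw [hval] at h
  simp only [smul_eq_mul] at h
  rw [← Finset.mul_sum] at h
  calc ∑ i, Real.negMulLog (q i) = (n:ℝ) * ((n:ℝ)⁻¹ * ∑ i, Real.negMulLog (q i)) := by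
        field_simp
    _ ≤ (n:ℝ) * ((n:ℝ)⁻¹ * Real.log n) := by
        apply mul_le_mul_of_nonneg_left h (le_of_lt hn')
    _ = Real.log n := by field_simp

lemma sum_range_eq_sum_Icc {N : ℕ} (hN : 1 ≤ N) (f : ℕ → ℝ) (h0 : f 0 = 0) :
    ∑ t ∈ range N, f t = ∑ t ∈ Icc 1 (N - 1), f t := by
  have hr : range N = insert 0 (Icc 1 (N - 1)) := by
    ext t
    simp only [mem_range, mem_insert, mem_Icc]
    omega
  rw [hr, Finset.sum_insert (by simp), h0, zero_add]

lemma sum_negMulLog_counts {ι : Type*} (s : Finset ι) (g : ι → ℕ) {M : ℕ} (hM : 0 < M)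
    (hg : ∑ i ∈ s, g i = M) :
    ∑ i ∈ s, Real.negMulLog ((g i : ℝ) / (M : ℝ))
      = Real.log M - (1 / (M : ℝ)) * ∑ i ∈ s, flog (g i) := by
  have hMr : (0:ℝ) < M := by exact_mod_cast hM
  rw [Finset.sum_congr rfl (fun i _ => negMulLog_nat_div (g i) hMr), Finset.sum_sub_distrib]
  congr 1
  · rw [← Finset.sum_mul, ← Finset.sum_div]
    have : ∑ i ∈ s, (g i : ℝ) = (M : ℝ) := by rw [← Nat.cast_sum, hg]
    rw [this, div_self (ne_of_gt hMr), one_mul]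
  · rw [Finset.mul_sum]

lemma sum_range_counts {N M : ℕ} (hM : M = N.choose 2) :
    ∑ t ∈ range N, t = M := by rw [Finset.sum_range_id, hM, Nat.choose_two_right]

/-- Staircase entropy value. -/
lemma staircase_entropy {N M : ℕ} (hN : 2 ≤ N) (hM : M = N.choose 2) :
    ∑ t ∈ Icc 1 (N - 1), Real.negMulLog ((t : ℝ) / (M : ℝ))
      = Real.log M - (1 / (M : ℝ)) * ∑ t ∈ range N, flog t := by
  have hMpos : 0 < M := hM ▸ Nat.choose_pos hN
  rw [← sum_range_eq_sum_Icc (by omega) _ (by simp)]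
  exact sum_negMulLog_counts (range N) id hMpos (sum_range_counts hM)

lemma row_negMulLog_bound {N M : ℕ} (hN : 2 ≤ N) (hM : M = N.choose 2)
    (F : PT N → Fin N) (hF : ∀ P, F P ∈ P.1) :
    ∑ t ∈ Icc 1 (N - 1), Real.negMulLog ((t : ℝ) / (M : ℝ))
      ≤ ∑ x : Fin N,
          Real.negMulLog ((1 / (M : ℝ)) * ((univ.filter fun P => F P = x).card : ℝ)) := by
  have hMpos : 0 < M := hM ▸ Nat.choose_pos hN
  have hMr : (0:ℝ) < M := by exact_mod_cast hMpos
  have hrw : ∀ x : Fin N, (1 / (M : ℝ)) * ((univ.filter fun P => F P = x).card : ℝ)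
      = (((univ.filter fun P => F P = x).card : ℕ) : ℝ) / (M : ℝ) := by
    intro x; ring
  have hsr : ∑ x : Fin N,
        Real.negMulLog ((1 / (M : ℝ)) * ((univ.filter fun P => F P = x).card : ℝ))
      = ∑ x : Fin N,
        Real.negMulLog ((((univ.filter fun P => F P = x).card : ℕ) : ℝ) / (M : ℝ)) :=
    Finset.sum_congr rfl fun x _ => by rw [hrw x]
  rw [hsr, sum_negMulLog_counts univ _ hMpos (by rw [fiber_card_sum N F, hM]),
    staircase_entropy hN hM]
  have hflog := row_flog_bound hN F hF
  have h1M : 0 ≤ 1 / (M:ℝ) := by positivity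
  nlinarith [mul_le_mul_of_nonneg_left hflog h1M]


section Construction

variable {N : ℕ}

lemma PT_image_nonempty (P : PT N) (w : Equiv.Perm (Fin N)) : (P.1.image w).Nonempty :=
  Finset.image_nonempty.2 (Finset.card_pos.1 (by rw [P.2]; norm_num))

/-- Select the element of `P` with the largest `w`-value. -/
def pickMax (P : PT N) (w : Equiv.Perm (Fin N)) : Fin N :=
  w.symm ((P.1.image w).max' (PT_image_nonempty P w))

lemma pickMax_mem (P : PT N) (w : Equiv.Perm (Fin N)) : pickMax P w ∈ P.1 := by
  obtain ⟨a, ha, hwa⟩ := Finset.mem_image.1 ((P.1.image w).max'_mem (PT_image_nonempty P w))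
  rw [pickMax, ← hwa, Equiv.symm_apply_apply]
  exact ha

lemma w_pickMax (P : PT N) (w : Equiv.Perm (Fin N)) :
    w (pickMax P w) = (P.1.image w).max' (PT_image_nonempty P w) := by
  rw [pickMax, Equiv.apply_symm_apply]

lemma pickMax_le (P : PT N) (w : Equiv.Perm (Fin N)) {y : Fin N} (hy : y ∈ P.1) :
    w y ≤ w (pickMax P w) := by
  rw [w_pickMax]
  exact Finset.le_max' _ _ (Finset.mem_image_of_mem w hy)

lemma pickMax_pair {w : Equiv.Perm (Fin N)} {x y : Fin N} (hlt : w y < w x) (P : PT N)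
    (hP : P.1 = {x, y}) : pickMax P w = x := by
  have hximg : x ∈ P.1 := by rw [hP]; exact Finset.mem_insert_self _ _
  have hmax : (P.1.image w).max' (PT_image_nonempty P w) = w x := by
    apply le_antisymm
    · apply Finset.max'_le
      intro b hb
      rw [hP] at hb
      simp only [Finset.image_insert, Finset.image_singleton, Finset.mem_insert,
        Finset.mem_singleton] at hb
      rcases hb with rfl | rfl
      · exact le_rfl
      · exact le_of_lt hlt
    · exact Finset.le_max' _ _ (Finset.mem_image_of_mem w hximg)
  rw [pickMax, hmax, Equiv.symm_apply_apply]

lemma count_pickMax (w : Equiv.Perm (Fin N)) (x : Fin N) :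
    (univ.filter fun P : PT N => pickMax P w = x).card = (w x : ℕ) := by
  classical
  have step1 : (univ.filter fun y : Fin N => w y < w x).card
      = (univ.filter fun P : PT N => pickMax P w = x).card := by
    apply Finset.card_bij (fun y hy => (⟨{x, y}, Finset.card_pair (by
      intro h
      have := (Finset.mem_filter.1 hy).2
      rw [h] at this
      exact lt_irrefl _ this)⟩ : PT N))
    · intro y hy
      simp only [Finset.mem_filter, Finset.mem_univ, true_and]
      exact pickMax_pair (Finset.mem_filter.1 hy).2 _ rfl
    · intro y hy y' hy' h
      have h2 := congrArg (fun Q : PT N => Q.1) h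
      simp only at h2
      have : y ∈ ({x, y'} : Finset (Fin N)) := by
        rw [← h2]; exact Finset.mem_insert.2 (Or.inr (Finset.mem_singleton_self y))
      rcases Finset.mem_insert.1 this with rfl | hm
      · exfalso; exact lt_irrefl _ (Finset.mem_filter.1 hy).2
      · exact Finset.mem_singleton.1 hm
    · intro P hP
      have hPx : pickMax P w = x := (Finset.mem_filter.1 hP).2
      have hxP : x ∈ P.1 := hPx ▸ pickMax_mem P w
      obtain ⟨a, b, hab, hPab⟩ := Finset.card_eq_two.1 P.2
      have hx' : x = a ∨ x = b := by
        rw [hPab] at hxP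
        simpa using hxP
      obtain ⟨y, hxy, hPxy⟩ : ∃ y, y ≠ x ∧ P.1 = {x, y} := by
        rcases hx' with rfl | rfl
        · exact ⟨b, fun h => hab h.symm, hPab⟩
        · exact ⟨a, fun h => hab h, by rw [hPab, Finset.pair_comm]⟩
      have hyP : y ∈ P.1 := by rw [hPxy]; simp
      have hwyx : w y < w x := by
        have hle : w y ≤ w x := hPx ▸ pickMax_le P w hyP
        have hne : w y ≠ w x := fun h => hxy (w.injective h)
        exact lt_of_le_of_ne hle hne
      refine ⟨y, Finset.mem_filter.2 ⟨Finset.mem_univ _, hwyx⟩, ?_⟩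
      exact Subtype.ext (by rw [hPxy])
  have step2 : (univ.filter fun y : Fin N => w y < w x).card = (w x : ℕ) := by
    rw [← Fin.card_Iio (w x)]
    apply Finset.card_bij' (fun y _ => w y) (fun z _ => w.symm z)
    · intro y hy
      exact Finset.mem_Iio.2 (Finset.mem_filter.1 hy).2
    · intro z hz
      refine Finset.mem_filter.2 ⟨Finset.mem_univ _, ?_⟩
      rw [Equiv.apply_symm_apply]
      exact Finset.mem_Iio.1 hz
    · intro y _; exact Equiv.symm_apply_apply w y
    · intro z _; exact Equiv.apply_symm_apply w z
  rw [← step1, step2]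

end Construction

lemma nu_sum_one {N M : ℕ} (hN : 2 ≤ N) (hM : M = N.choose 2) (S : PairScheme N) (w : S.W) :
    ∑ x, S.nu M w x = 1 := by
  have hMpos : 0 < M := hM ▸ Nat.choose_pos hN
  have hMr : (0:ℝ) < M := by exact_mod_cast hMpos
  simp only [PairScheme.nu]
  rw [← Finset.mul_sum, ← Nat.cast_sum]
  rw [fiber_card_sum N (fun P => S.σ P w), ← hM]
  field_simp

lemma scheme_upper {N M : ℕ} (hN : 2 ≤ N) (hM : M = N.choose 2) (S : PairScheme N) :
    S.mutualInfo M ≤ Real.log N - ∑ t ∈ Icc 1 (N - 1), Real.negMulLog ((t : ℝ) / (M : ℝ)) := by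
  have hMpos : 0 < M := hM ▸ Nat.choose_pos hN
  have hMr : (0:ℝ) < M := by exact_mod_cast hMpos
  set K := ∑ t ∈ Icc 1 (N - 1), Real.negMulLog ((t : ℝ) / (M : ℝ)) with hK
  have hnu_nonneg : ∀ w x, 0 ≤ S.nu M w x := fun w x => by
    simp only [PairScheme.nu]; positivity
  have hmu_nonneg : ∀ x, 0 ≤ S.mu M x := fun x =>
    Finset.sum_nonneg fun w _ => mul_nonneg (S.p_nonneg w) (hnu_nonneg w x)
  have hmu_sum : ∑ x, S.mu M x = 1 := by
    simp only [PairScheme.mu]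
    rw [Finset.sum_comm]
    have hrow : ∀ w : S.W, ∑ x, S.p w * S.nu M w x = S.p w := fun w => by
      rw [← Finset.mul_sum, nu_sum_one hN hM S w, mul_one]
    rw [Finset.sum_congr rfl fun w _ => hrow w, S.p_sum_one]
  have hA : ∑ x, Real.negMulLog (S.mu M x) ≤ Real.log N :=
    entropy_le_log N (by omega) _ hmu_nonneg hmu_sum
  have hB : ∀ w : S.W, K ≤ ∑ x, Real.negMulLog (S.nu M w x) := fun w => by
    have h := row_negMulLog_bound hN hM (fun P => S.σ P w) (fun P => S.σ_mem P w)
    simpa [PairScheme.nu, hK] using h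
  have hBsum : K ≤ ∑ w, S.p w * ∑ x, Real.negMulLog (S.nu M w x) := by
    calc K = ∑ w, S.p w * K := by rw [← Finset.sum_mul, S.p_sum_one, one_mul]
      _ ≤ _ := Finset.sum_le_sum fun w _ =>
          mul_le_mul_of_nonneg_left (hB w) (S.p_nonneg w)
  rw [PairScheme.mutualInfo]
  exact sub_le_sub hA hBsum


section MaxScheme

variable {N : ℕ}

noncomputable def maxScheme (N : ℕ) : PairScheme N where
  W := Equiv.Perm (Fin N)
  p := fun _ => 1 / (Nat.factorial N : ℝ)
  σ := fun P w => pickMax P w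
  p_nonneg := fun _ => by positivity
  p_sum_one := by
    rw [Finset.sum_const, Finset.card_univ, Fintype.card_perm, Fintype.card_fin,
      nsmul_eq_mul]
    field_simp
  σ_mem := fun P w => pickMax_mem P w

lemma pickMax_mul_swap (P : PT N) (w : Equiv.Perm (Fin N)) {x y : Fin N}
    (hP : P.1 = {x, y}) :
    pickMax P (w * Equiv.swap x y) = Equiv.swap x y (pickMax P w) := by
  have himg : P.1.image (w * Equiv.swap x y) = P.1.image w := by
    rw [hP]
    simp only [Finset.image_insert, Finset.image_singleton, Equiv.Perm.mul_apply,
      Equiv.swap_apply_left, Equiv.swap_apply_right]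
    exact Finset.pair_comm _ _
  have hm : (P.1.image (w * Equiv.swap x y)).max' (PT_image_nonempty P _)
      = (P.1.image w).max' (PT_image_nonempty P w) := by
    apply le_antisymm
    · exact Finset.max'_le _ _ _ fun b hb => Finset.le_max' _ _ (himg ▸ hb)
    · exact Finset.max'_le _ _ _ fun b hb => Finset.le_max' _ _ (himg ▸ hb)
  rw [pickMax, hm, pickMax]
  have hsy : (w * Equiv.swap x y).symm = w.symm.trans (Equiv.swap x y) := by
    have : (w * Equiv.swap x y).symm = w.symm.trans (Equiv.swap x y).symm := by
      rw [Equiv.Perm.mul_def]; exact rfl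
    rw [this, Equiv.symm_swap]
  rw [hsy]
  simp [Equiv.trans_apply]

lemma maxScheme_distortionFree : (maxScheme N).DistortionFree := by
  intro P x hx
  obtain ⟨a, b, hab, hPab⟩ := Finset.card_eq_two.1 P.2
  have hx' : x = a ∨ x = b := by rw [hPab] at hx; simpa using hx
  obtain ⟨y, hxy, hPxy⟩ : ∃ y, x ≠ y ∧ P.1 = {x, y} := by
    rcases hx' with rfl | rfl
    · exact ⟨b, hab, hPab⟩
    · exact ⟨a, fun h => hab h.symm, by rw [hPab, Finset.pair_comm]⟩
  have hσ : (maxScheme N).σ = fun P w => pickMax P w := rfl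
  have hkey : ∀ w : Equiv.Perm (Fin N),
      pickMax P (w * Equiv.swap x y) = Equiv.swap x y (pickMax P w) :=
    fun w => pickMax_mul_swap P w hPxy
  have hcards : (univ.filter fun w : Equiv.Perm (Fin N) => pickMax P w = x).card
      = (univ.filter fun w : Equiv.Perm (Fin N) => pickMax P w = y).card := by
    apply Finset.card_bij (fun w _ => w * Equiv.swap x y)
    · intro w hw
      refine Finset.mem_filter.2 ⟨Finset.mem_univ _, ?_⟩
      rw [hkey w, (Finset.mem_filter.1 hw).2, Equiv.swap_apply_left]
    · intro w _ w' _ h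
      exact mul_right_cancel h
    · intro v hv
      refine ⟨v * Equiv.swap x y, Finset.mem_filter.2 ⟨Finset.mem_univ _, ?_⟩, ?_⟩
      · rw [hkey v, (Finset.mem_filter.1 hv).2, Equiv.swap_apply_right]
      · rw [mul_assoc, Equiv.swap_mul_self, mul_one]
  have hpart : (univ.filter fun w : Equiv.Perm (Fin N) => pickMax P w = x).card
      + (univ.filter fun w : Equiv.Perm (Fin N) => pickMax P w = y).card
      = Nat.factorial N := by
    rw [← Finset.card_union_of_disjoint]
    · have huniv : (univ.filter fun w : Equiv.Perm (Fin N) => pickMax P w = x)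
          ∪ (univ.filter fun w => pickMax P w = y) = univ := by
        ext w
        simp only [Finset.mem_union, Finset.mem_filter, Finset.mem_univ, true_and,
          iff_true]
        have := pickMax_mem P w
        rw [hPxy] at this
        simpa using this
      rw [huniv, Finset.card_univ, Fintype.card_perm, Fintype.card_fin]
    · rw [Finset.disjoint_filter]
      intro w _ h1 h2
      exact hxy (h1 ▸ h2 ▸ rfl)
  have h2c : 2 * (univ.filter fun w : Equiv.Perm (Fin N) => pickMax P w = x).card
      = Nat.factorial N := by omega
  show ∑ w ∈ Finset.univ.filter (fun w => (maxScheme N).σ P w = x), (maxScheme N).p w = 1/2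
  rw [hσ]
  simp only [maxScheme]
  rw [Finset.sum_const, nsmul_eq_mul]
  have hfac : (0:ℝ) < (Nat.factorial N : ℝ) := by
    exact_mod_cast Nat.factorial_pos N
  have : ((univ.filter fun w : Equiv.Perm (Fin N) => pickMax P w = x).card : ℝ)
      = (Nat.factorial N : ℝ) / 2 := by
    have := congrArg (fun n : ℕ => (n : ℝ)) h2c
    push_cast at this
    linarith
  change ((univ.filter fun w : Equiv.Perm (Fin N) => pickMax P w = x).card : ℝ)
    * (1 / (Nat.factorial N : ℝ)) = 1 / 2
  rw [this]
  field_simp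

end MaxScheme


section Values

variable {N : ℕ}

lemma maxScheme_nu (M : ℕ) (w : Equiv.Perm (Fin N)) (x : Fin N) :
    (maxScheme N).nu M w x = (1 / (M : ℝ)) * (((w x : ℕ) : ℝ)) := by
  simp only [PairScheme.nu, maxScheme]
  change 1 / (M : ℝ) * ((univ.filter fun P : PT N => pickMax P w = x).card : ℝ) = _
  rw [count_pickMax]

lemma maxScheme_row {M : ℕ} (hN : 2 ≤ N) (hM : M = N.choose 2) (w : Equiv.Perm (Fin N)) :
    ∑ x, Real.negMulLog ((maxScheme N).nu M w x)
      = ∑ t ∈ Icc 1 (N - 1), Real.negMulLog ((t : ℝ) / (M : ℝ)) := by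
  have h1 : ∀ x : Fin N, Real.negMulLog ((maxScheme N).nu M w x)
      = (fun i : Fin N => Real.negMulLog (((i : ℕ) : ℝ) / (M : ℝ))) (w x) := fun x => by
    rw [maxScheme_nu]
    congr 1
    ring
  rw [Finset.sum_congr rfl fun x _ => h1 x,
    Equiv.sum_comp w (fun i : Fin N => Real.negMulLog (((i : ℕ) : ℝ) / (M : ℝ))),
    Fin.sum_univ_eq_sum_range (fun t : ℕ => Real.negMulLog ((t : ℝ) / (M : ℝ))) N]
  exact sum_range_eq_sum_Icc (by omega) _ (by simp)

lemma perm_sum_val (x x' : Fin N) :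
    ∑ w : Equiv.Perm (Fin N), ((w x' : ℕ) : ℝ)
      = ∑ w : Equiv.Perm (Fin N), ((w x : ℕ) : ℝ) := by
  apply Finset.sum_equiv (Equiv.mulRight (Equiv.swap x x')) (by simp)
  intro i _
  show ((i x' : ℕ) : ℝ) = (((i * Equiv.swap x x') x : ℕ) : ℝ)
  rw [Equiv.Perm.mul_apply, Equiv.swap_apply_left]

lemma maxScheme_mu {M : ℕ} (hN : 2 ≤ N) (hM : M = N.choose 2) (x : Fin N) :
    (maxScheme N).mu M x = 1 / (N : ℝ) := by
  have hMpos : 0 < M := hM ▸ Nat.choose_pos hN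
  have hMr : (0:ℝ) < M := by exact_mod_cast hMpos
  have hNr : (0:ℝ) < N := by exact_mod_cast (by omega : 0 < N)
  have hfac : (0:ℝ) < (Nat.factorial N : ℝ) := by exact_mod_cast Nat.factorial_pos N
  have hNT : (N : ℝ) * (∑ w : Equiv.Perm (Fin N), ((w x : ℕ) : ℝ))
      = (Nat.factorial N : ℝ) * (M : ℝ) := by
    calc (N:ℝ) * ∑ w : Equiv.Perm (Fin N), ((w x : ℕ) : ℝ)
        = ∑ x' : Fin N, ∑ w : Equiv.Perm (Fin N), ((w x' : ℕ) : ℝ) := by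
          rw [Finset.sum_congr rfl (fun x' _ => perm_sum_val x x'), Finset.sum_const,
            Finset.card_univ, Fintype.card_fin, nsmul_eq_mul]
      _ = ∑ w : Equiv.Perm (Fin N), ∑ x' : Fin N, ((w x' : ℕ) : ℝ) := Finset.sum_comm
      _ = ∑ _w : Equiv.Perm (Fin N), (M : ℝ) := by
          refine Finset.sum_congr rfl fun w _ => ?_
          rw [Equiv.sum_comp w (fun i : Fin N => ((i : ℕ) : ℝ)),
            Fin.sum_univ_eq_sum_range (fun t : ℕ => (t : ℝ)) N,
            ← Nat.cast_sum, sum_range_counts hM]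
      _ = (Nat.factorial N : ℝ) * (M : ℝ) := by
          rw [Finset.sum_const, Finset.card_univ, Fintype.card_perm, Fintype.card_fin,
            nsmul_eq_mul]
  have hterm : ∀ w : Equiv.Perm (Fin N),
      (maxScheme N).p w * (maxScheme N).nu M w x
        = (1 / (Nat.factorial N : ℝ)) * ((1 / (M : ℝ)) * ((w x : ℕ) : ℝ)) := fun w => by
    rw [maxScheme_nu]
    rfl
  rw [PairScheme.mu]
  show (∑ w : Equiv.Perm (Fin N), (maxScheme N).p w * (maxScheme N).nu M w x) = _
  rw [Finset.sum_congr rfl fun w _ => hterm w, ← Finset.mul_sum, ← Finset.mul_sum]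
  field_simp
  linarith [hNT]

lemma maxScheme_value {M : ℕ} (hN : 2 ≤ N) (hM : M = N.choose 2) :
    (maxScheme N).mutualInfo M
      = Real.log N - ∑ t ∈ Icc 1 (N - 1), Real.negMulLog ((t : ℝ) / (M : ℝ)) := by
  have hNr : (0:ℝ) < N := by exact_mod_cast (by omega : 0 < N)
  rw [PairScheme.mutualInfo]
  have h1 : ∑ x : Fin N, Real.negMulLog ((maxScheme N).mu M x) = Real.log N := by
    rw [Finset.sum_congr rfl fun x _ => by rw [maxScheme_mu hN hM x]]
    rw [Finset.sum_const, Finset.card_univ, Fintype.card_fin, nsmul_eq_mul]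
    rw [Real.negMulLog, one_div, Real.log_inv]
    field_simp
  have h2 : ∑ w, (maxScheme N).p w * ∑ x, Real.negMulLog ((maxScheme N).nu M w x)
      = ∑ t ∈ Icc 1 (N - 1), Real.negMulLog ((t : ℝ) / (M : ℝ)) := by
    rw [Finset.sum_congr rfl fun w _ => by rw [maxScheme_row hN hM w]]
    rw [← Finset.sum_mul, (maxScheme N).p_sum_one, one_mul]
  rw [h1, h2]

end Values


/-- The set of mutual-information values of distortion-free pair-assignment schemes on
`Fin N` has greatest element `log N − ∑_{t=1}^{N−1} negMulLog (t/M)`, where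
`M = N(N−1)/2`. -/
theorem capacity_pair_schemes (N : ℕ) (hN : 2 ≤ N) (M : ℕ) (hM : M = N * (N - 1) / 2) :
    IsGreatest {x : ℝ | ∃ S : PairScheme N, S.DistortionFree ∧ x = S.mutualInfo M}
      (Real.log N - ∑ t ∈ Finset.Icc 1 (N - 1), Real.negMulLog ((t : ℝ) / (M : ℝ))) := by
  have hMc : M = N.choose 2 := by rw [hM, Nat.choose_two_right]
  constructor
  · exact ⟨maxScheme N, maxScheme_distortionFree, (maxScheme_value hN hMc).symm⟩
  · rintro v ⟨S, _, rfl⟩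
    exact scheme_upper hN hMc S
end

section
/- Let M_N = N(N−1)/2. Then, as N → ∞, the sequence logb 2 N + ∑_{t=1}^{N−1} (t/M_N) · logb 2 (t/M_N) converges to logb 2 (2 / exp(1/2)) = 1 − 1/(2·log 2) ≈ 0.2787. -/
open Real Filter

-- integral of x log x
lemma integral_xlogx (b : ℝ) (hb : 1 ≤ b) :
    ∫ x in (1:ℝ)..b, x * Real.log x = b^2/2 * Real.log b - b^2/4 + 1/4 := by
  have h : ∀ x ∈ Set.uIcc (1:ℝ) b, HasDerivAt (fun y => y^2/2 * Real.log y - y^2/4)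
      (x * Real.log x) x := by
    intro x hx
    rw [Set.uIcc_of_le hb] at hx
    have hx0 : (0:ℝ) < x := lt_of_lt_of_le one_pos hx.1
    have h1 : HasDerivAt (fun y : ℝ => y^2/2) x x := by
      simpa using (hasDerivAt_pow 2 x).div_const 2
    have h2 : HasDerivAt Real.log (1/x) x := by
      simpa [one_div] using Real.hasDerivAt_log hx0.ne'
    have h3 : HasDerivAt (fun y : ℝ => y^2/4) (x/2) x := by
      have := (hasDerivAt_pow 2 x).div_const 4
      refine this.congr_deriv ?_
      push_cast
      ring
    have := (h1.mul h2).sub h3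
    refine this.congr_deriv ?_
    field_simp
    ring
  have hint : IntervalIntegrable (fun x => x * Real.log x) MeasureTheory.volume 1 b := by
    apply ContinuousOn.intervalIntegrable
    apply ContinuousOn.mul continuousOn_id
    apply Real.continuousOn_log.mono
    intro x hx
    rw [Set.uIcc_of_le hb] at hx
    simp only [Set.mem_compl_iff, Set.mem_singleton_iff]
    exact (lt_of_lt_of_le one_pos hx.1).ne'
  rw [intervalIntegral.integral_eq_sub_of_hasDerivAt h hint]
  simp [Real.log_one]

lemma xlogx_mono (n : ℕ) : MonotoneOn (fun x : ℝ => x * Real.log x) (Set.Icc (1:ℝ) n) := by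
  intro a ha b hb hab
  have ha1 : (1:ℝ) ≤ a := ha.1
  have hb1 : (1:ℝ) ≤ b := hb.1
  have : Real.log a ≤ Real.log b := Real.log_le_log (lt_of_lt_of_le one_pos ha1) hab
  have hla : 0 ≤ Real.log a := Real.log_nonneg ha1
  exact mul_le_mul hab this hla (le_trans zero_le_one hb1)

lemma sum_lower (n : ℕ) (hn : 1 ≤ n) :
    ∫ x in (1:ℝ)..(n:ℝ), x * Real.log x ≤ ∑ t ∈ Finset.Icc 1 n, (t:ℝ) * Real.log t := by
  have hm : MonotoneOn (fun x : ℝ => x * Real.log x) (Set.Icc ((1:ℕ):ℝ) ((n:ℕ):ℝ)) := by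
    simpa using xlogx_mono n
  have h := hm.integral_le_sum_Ico hn
  simp only [Nat.cast_one] at h
  refine le_trans h ?_
  calc ∑ i ∈ Finset.Ico 1 n, (↑(i+1):ℝ) * Real.log (↑(i+1):ℝ)
      = ∑ t ∈ Finset.Ico 2 (n+1), (t:ℝ) * Real.log t := by
        rw [Finset.sum_Ico_eq_sum_range, Finset.sum_Ico_eq_sum_range]
        apply Finset.sum_congr (by congr 1)
        intro i _
        have h2 : ((1:ℕ):ℝ) + i + 1 = ((2:ℕ):ℝ) + i := by push_cast; ring
        push_cast
        rw [show (1:ℝ) + i + 1 = 2 + i by ring]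
    _ ≤ ∑ t ∈ Finset.Ico 1 (n+1), (t:ℝ) * Real.log t := by
        apply Finset.sum_le_sum_of_subset_of_nonneg
        · exact Finset.Ico_subset_Ico (by omega) le_rfl
        · intro t ht _
          have ht1 : 1 ≤ t := (Finset.mem_Ico.mp ht).1
          have h1 : (1:ℝ) ≤ t := by exact_mod_cast ht1
          exact mul_nonneg (by linarith) (Real.log_nonneg h1)
    _ = ∑ t ∈ Finset.Icc 1 n, (t:ℝ) * Real.log t := by rw [Finset.Ico_add_one_right_eq_Icc]

lemma sum_upper (n : ℕ) (hn : 1 ≤ n) :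
    ∑ t ∈ Finset.Icc 1 n, (t:ℝ) * Real.log t
      ≤ (∫ x in (1:ℝ)..(n:ℝ), x * Real.log x) + (n:ℝ) * Real.log n := by
  have hm : MonotoneOn (fun x : ℝ => x * Real.log x) (Set.Icc ((1:ℕ):ℝ) ((n:ℕ):ℝ)) := by
    simpa using xlogx_mono n
  have h := hm.sum_le_integral_Ico hn
  simp only [Nat.cast_one] at h
  have heq : ∑ t ∈ Finset.Icc 1 n, (t:ℝ) * Real.log t
      = (∑ x ∈ Finset.Ico 1 n, (x:ℝ) * Real.log x) + (n:ℝ) * Real.log n := by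
    rw [← Finset.Ico_add_one_right_eq_Icc, Finset.sum_Ico_succ_top hn]
  rw [heq]
  linarith

lemma gauss_sum (n : ℕ) : ∑ t ∈ Finset.Icc 1 n, (t:ℝ) = (n:ℝ) * ((n:ℝ) + 1) / 2 := by
  induction n with
  | zero => simp
  | succ m ih =>
    rw [Finset.sum_Icc_succ_top (by omega)]
    push_cast
    rw [ih]
    ring

lemma tendsto_log_sub_one_div : Tendsto (fun x : ℝ => Real.log (x-1) / x) atTop (nhds 0) := by
  have h1 : Tendsto (fun x : ℝ => Real.log x / x) atTop (nhds 0) :=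
    Real.isLittleO_log_id_atTop.tendsto_div_nhds_zero
  refine tendsto_of_tendsto_of_tendsto_of_le_of_le' tendsto_const_nhds h1 ?_ ?_
  · filter_upwards [eventually_ge_atTop (2:ℝ)] with x hx
    have : (0:ℝ) ≤ Real.log (x-1) := Real.log_nonneg (by linarith)
    positivity
  · filter_upwards [eventually_ge_atTop (2:ℝ)] with x hx
    have hlt : (0:ℝ) ≤ x := by linarith
    exact div_le_div_of_nonneg_right (Real.log_le_log (by linarith) (by linarith)) (by linarith)

lemma tendsto_L : Tendsto (fun x : ℝ =>
    Real.log 2 - Real.log (x-1)/x - (x-1)/(2*x) + 1/(2*x*(x-1))) atTop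
    (nhds (Real.log 2 - 1/2)) := by
  have h1 := tendsto_log_sub_one_div
  have h2 : Tendsto (fun x : ℝ => (x-1)/(2*x)) atTop (nhds (1/2)) := by
    have he : (fun x : ℝ => 1/2 - 1/(2*x)) =ᶠ[atTop] (fun x : ℝ => (x-1)/(2*x)) := by
      filter_upwards [eventually_ge_atTop (1:ℝ)] with x hx
      have hx0 : x ≠ 0 := by linarith
      field_simp
    refine Tendsto.congr' he ?_
    have ha : Tendsto (fun x : ℝ => 2*x) atTop atTop := by
      apply tendsto_atTop_mono' atTop ?_ tendsto_id
      filter_upwards [eventually_ge_atTop (0:ℝ)] with x hx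
      simp only [id_eq]
      linarith
    have : Tendsto (fun x : ℝ => 1/(2*x)) atTop (nhds 0) := by
      simp only [one_div]
      exact tendsto_inv_atTop_zero.comp ha
    simpa using tendsto_const_nhds.sub this
  have h3 : Tendsto (fun x : ℝ => 1/(2*x*(x-1))) atTop (nhds 0) := by
    simp only [one_div]
    have hb : Tendsto (fun x : ℝ => 2*x*(x-1)) atTop atTop := by
      apply tendsto_atTop_mono' atTop ?_ tendsto_id
      filter_upwards [eventually_ge_atTop (2:ℝ)] with x hx
      simp only [id_eq]
      nlinarith
    exact tendsto_inv_atTop_zero.comp hb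
  have h := ((tendsto_const_nhds (α := ℝ) (x := Real.log 2)).sub h1).sub h2 |>.add h3
  have he : (Real.log 2 - 1/2) = Real.log 2 - 0 - 1/2 + 0 := by ring
  rw [he]
  exact h

lemma key_tendsto : Tendsto (fun N : ℕ =>
    Real.log N + (∑ t ∈ Finset.Icc 1 (N-1), (t:ℝ)*Real.log t)/((N:ℝ)*((N:ℝ)-1)/2)
      - Real.log ((N:ℝ)*((N:ℝ)-1)/2)) atTop (nhds (Real.log 2 - 1/2)) := by
  have hcast : Tendsto (fun N : ℕ => (N:ℝ)) atTop atTop := tendsto_natCast_atTop_atTop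
  have hL : Tendsto (fun N : ℕ =>
      Real.log 2 - Real.log ((N:ℝ)-1)/(N:ℝ) - ((N:ℝ)-1)/(2*(N:ℝ)) + 1/(2*(N:ℝ)*((N:ℝ)-1)))
      atTop (nhds (Real.log 2 - 1/2)) := tendsto_L.comp hcast
  have hU : Tendsto (fun N : ℕ =>
      (Real.log 2 - Real.log ((N:ℝ)-1)/(N:ℝ) - ((N:ℝ)-1)/(2*(N:ℝ)) + 1/(2*(N:ℝ)*((N:ℝ)-1)))
        + 2 * (Real.log ((N:ℝ)-1)/(N:ℝ))) atTop (nhds (Real.log 2 - 1/2)) := by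
    have h := hL.add ((tendsto_log_sub_one_div.comp hcast).const_mul 2)
    have he : Real.log 2 - 1/2 = (Real.log 2 - 1/2) + 2 * 0 := by ring
    rw [he]
    exact h
  refine tendsto_of_tendsto_of_tendsto_of_le_of_le' hL hU ?_ ?_
  · filter_upwards [eventually_ge_atTop 2] with N hN
    set x : ℝ := (N:ℝ) with hxdef
    have hx2 : (2:ℝ) ≤ x := by rw [hxdef]; exact_mod_cast hN
    have hx1 : (1:ℝ) ≤ x - 1 := by linarith
    have hn : 1 ≤ N - 1 := by omega
    have hc : ((N-1:ℕ):ℝ) = x - 1 := by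
      push_cast [Nat.cast_sub (by omega : 1 ≤ N)]
      ring
    have hcn : (1:ℝ) ≤ ((N-1:ℕ):ℝ) := by rw [hc]; linarith
    have hI := integral_xlogx ((N-1:ℕ):ℝ) hcn
    have hlow := sum_lower (N-1) hn
    rw [hI, hc] at hlow
    have hM : (0:ℝ) < x*(x-1)/2 := by nlinarith
    have hlogM : Real.log (x*(x-1)/2) = Real.log x + Real.log (x-1) - Real.log 2 := by
      rw [Real.log_div (by positivity) (by norm_num), Real.log_mul (by linarith) (by linarith)]
    have e1 : Real.log x + ((x-1)^2/2 * Real.log (x-1) - (x-1)^2/4 + 1/4)/(x*(x-1)/2)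
        - Real.log (x*(x-1)/2)
        = Real.log 2 - Real.log (x-1)/x - (x-1)/(2*x) + 1/(2*x*(x-1)) := by
      rw [hlogM]
      have hx0 : x ≠ 0 := by linarith
      have hx10 : x - 1 ≠ 0 := by linarith
      field_simp
      ring
    rw [← e1]
    gcongr
  · filter_upwards [eventually_ge_atTop 2] with N hN
    set x : ℝ := (N:ℝ) with hxdef
    have hx2 : (2:ℝ) ≤ x := by rw [hxdef]; exact_mod_cast hN
    have hx1 : (1:ℝ) ≤ x - 1 := by linarith
    have hn : 1 ≤ N - 1 := by omega
    have hc : ((N-1:ℕ):ℝ) = x - 1 := by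
      push_cast [Nat.cast_sub (by omega : 1 ≤ N)]
      ring
    have hcn : (1:ℝ) ≤ ((N-1:ℕ):ℝ) := by rw [hc]; linarith
    have hI := integral_xlogx ((N-1:ℕ):ℝ) hcn
    have hup := sum_upper (N-1) hn
    rw [hI, hc] at hup
    have hM : (0:ℝ) < x*(x-1)/2 := by nlinarith
    have hlogM : Real.log (x*(x-1)/2) = Real.log x + Real.log (x-1) - Real.log 2 := by
      rw [Real.log_div (by positivity) (by norm_num), Real.log_mul (by linarith) (by linarith)]
    have e2 : Real.log x + (((x-1)^2/2 * Real.log (x-1) - (x-1)^2/4 + 1/4) + (x-1)*Real.log (x-1))/(x*(x-1)/2)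
        - Real.log (x*(x-1)/2)
        = (Real.log 2 - Real.log (x-1)/x - (x-1)/(2*x) + 1/(2*x*(x-1))) + 2*(Real.log (x-1)/x) := by
      rw [hlogM]
      have hx0 : x ≠ 0 := by linarith
      have hx10 : x - 1 ≠ 0 := by linarith
      field_simp
      ring
    rw [← e2]
    gcongr

/-- With `M_N = N(N−1)/2`, the capacity expression
`logb 2 N + ∑_{t=1}^{N−1} (t/M_N) · logb 2 (t/M_N)` converges, as `N → ∞`, to
`logb 2 (2 / exp (1/2))`, which equals `1 − 1/(2 log 2)`. -/
theorem capacity_limit :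
    Tendsto
      (fun N : ℕ =>
        Real.logb 2 N +
          ∑ t ∈ Finset.Icc 1 (N - 1),
            ((t : ℝ) / ((N : ℝ) * ((N : ℝ) - 1) / 2)) *
              Real.logb 2 ((t : ℝ) / ((N : ℝ) * ((N : ℝ) - 1) / 2)))
      atTop (nhds (Real.logb 2 (2 / Real.exp (1 / 2)))) ∧
    Real.logb 2 (2 / Real.exp (1 / 2)) = 1 - 1 / (2 * Real.log 2) := by
  have hlog2 : Real.log 2 ≠ 0 := (Real.log_pos (by norm_num)).ne'
  constructor
  · have hval : Real.logb 2 (2 / Real.exp (1/2)) = (1/Real.log 2) * (Real.log 2 - 1/2) := by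
      rw [Real.logb, Real.log_div (by norm_num) (Real.exp_ne_zero _), Real.log_exp]
      ring
    rw [hval]
    have h := key_tendsto.const_mul (1/Real.log 2)
    refine Tendsto.congr' ?_ h
    filter_upwards [eventually_ge_atTop 2] with N hN
    have hx2 : (2:ℝ) ≤ (N:ℝ) := by exact_mod_cast hN
    set x : ℝ := (N:ℝ) with hxdef
    set M : ℝ := x*(x-1)/2 with hMdef
    have hM : 0 < M := by rw [hMdef]; nlinarith
    have hc : ((N-1:ℕ):ℝ) = x - 1 := by
      rw [hxdef]
      push_cast [Nat.cast_sub (by omega : 1 ≤ N)]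
      ring
    have hgauss : ∑ t ∈ Finset.Icc 1 (N-1), (t:ℝ) = M := by
      rw [gauss_sum (N-1), hc, hMdef]
      ring
    have hterm : ∀ t ∈ Finset.Icc 1 (N-1), ((t:ℝ)/M) * Real.logb 2 ((t:ℝ)/M)
        = (1/Real.log 2) * (((t:ℝ)*Real.log t)/M - (Real.log M/M) * (t:ℝ)) := by
      intro t ht
      have ht1 : 1 ≤ t := (Finset.mem_Icc.mp ht).1
      have htR : (0:ℝ) < (t:ℝ) := by exact_mod_cast ht1
      rw [Real.logb, Real.log_div htR.ne' hM.ne']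
      field_simp
    have hsum : ∑ t ∈ Finset.Icc 1 (N-1), ((t:ℝ)/M) * Real.logb 2 ((t:ℝ)/M)
        = (1/Real.log 2) *
          ((∑ t ∈ Finset.Icc 1 (N-1), (t:ℝ)*Real.log t)/M - Real.log M) := by
      rw [Finset.sum_congr rfl hterm, ← Finset.mul_sum]
      congr 1
      rw [Finset.sum_sub_distrib, ← Finset.sum_div, ← Finset.mul_sum, hgauss]
      congr 1
      field_simp
    show (1/Real.log 2)
        * (Real.log x + (∑ t ∈ Finset.Icc 1 (N-1), (t:ℝ)*Real.log t)/M - Real.log M)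
      = Real.logb 2 x + ∑ t ∈ Finset.Icc 1 (N-1), ((t:ℝ)/M) * Real.logb 2 ((t:ℝ)/M)
    rw [hsum, Real.logb]
    field_simp
    ring
  · rw [Real.logb, Real.log_div (by norm_num) (Real.exp_ne_zero _), Real.log_exp]
    field_simp
end

section
/- Let N ≥ 2 and M = N(N−1)/2. Let s : Fin N → ℕ satisfy ∑_{i ∈ Fin N} s(i) = M and, for every subset T ⊆ Fin N with |T| = t, the bound ∑_{i ∈ T} s(i) ≤ t(N−t) + t(t−1)/2. Then ∑_{i ∈ Fin N} negMulLog(s(i)/M) ≥ ∑_{t=1}^{N−1} negMulLog(t/M). -/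
open Real Finset

lemma quad_id (t u : ℕ) : t*(t-1) + 2*(t*u) + u*(u-1) = (t+u)*(t+u-1) := by
  cases t <;> cases u <;> simp [Nat.succ_sub_one] <;> ring

lemma even_half (n : ℕ) : 2 * (n*(n-1)/2) = n*(n-1) := by
  rcases n with _ | m
  · simp
  · rw [Nat.mul_div_cancel']
    simpa [Nat.mul_comm] using (Nat.even_mul_succ_self m).two_dvd

lemma tangent_negMulLog {x y : ℝ} (hx : 0 < x) (hy : 0 ≤ y) :
    Real.negMulLog y ≤ Real.negMulLog x + (-Real.log x - 1) * (y - x) := by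
  rcases eq_or_lt_of_le hy with h | hy'
  · simp only [← h, Real.negMulLog_zero, Real.negMulLog, neg_mul]
    nlinarith [Real.log_le_sub_one_of_pos hx]
  · have key : y - x ≤ y * Real.log (y / x) := by
      have h1 : Real.log (x / y) ≤ x / y - 1 := Real.log_le_sub_one_of_pos (by positivity)
      have h2 : Real.log (y / x) = - Real.log (x / y) := by
        rw [← Real.log_inv]; congr 1; field_simp
      have h3 : y * Real.log (x/y) ≤ y * (x/y - 1) := mul_le_mul_of_nonneg_left h1 hy'.le
      have h4 : y * (x/y) = x := by field_simp
      nlinarith [h2]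
    have hlog : Real.log (y / x) = Real.log y - Real.log x := Real.log_div hy'.ne' hx.ne'
    simp only [Real.negMulLog, neg_mul]
    nlinarith [key, hlog]

lemma abel_nonpos (n : ℕ) (c d : ℕ → ℝ)
    (hc : ∀ i, i + 1 < n → c (i + 1) ≤ c i)
    (hd : ∀ t, t ≤ n → ∑ i ∈ range t, d i ≤ 0)
    (hdn : ∑ i ∈ range n, d i = 0) :
    ∑ i ∈ range n, c i * d i ≤ 0 := by
  have := Finset.sum_range_by_parts c d n
  simp only [smul_eq_mul] at this
  rw [this, hdn, mul_zero, zero_sub, neg_nonpos]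
  apply Finset.sum_nonneg
  intro i hi
  simp only [Finset.mem_range] at hi
  have h1 : c (i + 1) - c i ≤ 0 := by
    have := hc i (by omega); linarith
  have h2 : ∑ j ∈ range (i + 1), d j ≤ 0 := hd (i + 1) (by omega)
  nlinarith [h1, h2]

/-- Entropy lower bound for row counts: if `s : Fin N → ℕ` sums to `M = N(N−1)/2` and for
every subset `T` of cardinality `t` we have `∑_{i ∈ T} s(i) ≤ t(N−t) + t(t−1)/2`, then the
entropy `∑_i negMulLog (s(i)/M)` is at least `∑_{t=1}^{N−1} negMulLog (t/M)`. -/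
theorem entropy_lower_bound (N : ℕ) (hN : 2 ≤ N) (M : ℕ) (hM : M = N * (N - 1) / 2)
    (s : Fin N → ℕ) (hsum : ∑ i, s i = M)
    (hbound : ∀ (T : Finset (Fin N)) (t : ℕ), T.card = t →
      ∑ i ∈ T, s i ≤ t * (N - t) + t * (t - 1) / 2) :
    ∑ t ∈ Finset.Icc 1 (N - 1), Real.negMulLog ((t : ℝ) / (M : ℝ)) ≤
      ∑ i, Real.negMulLog ((s i : ℝ) / (M : ℝ)) := by
  set σ := Tuple.sort s with hσ
  set a : ℕ → ℕ := fun i => if h : i < N then s (σ ⟨i, h⟩) else 0 with ha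
  have ha_mono : ∀ i j, i ≤ j → j < N → a i ≤ a j := by
    intro i j hij hj
    have := Tuple.monotone_sort s (a := (⟨i, lt_of_le_of_lt hij hj⟩ : Fin N))
      (b := ⟨j, hj⟩) hij
    simpa [ha, dif_pos hj, dif_pos (lt_of_le_of_lt hij hj), Function.comp] using this
  have ha_val : ∀ i : Fin N, a i.val = s (σ i) := by
    intro i; simp [ha, i.isLt]
  have hasum : ∑ i ∈ range N, a i = M := by
    rw [← Fin.sum_univ_eq_sum_range a N]
    simp only [ha_val]
    rw [Equiv.sum_comp σ s, hsum]
  have hMtwo : 2 * M = N * (N - 1) := by rw [hM]; exact even_half N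
  have hpref : ∀ t, t ≤ N → ∑ i ∈ range t, i ≤ ∑ i ∈ range t, a i := by
    intro t ht
    set T : Finset (Fin N) := (univ.filter fun j : Fin N => t ≤ j.val).image σ with hT
    have hcard : T.card = N - t := by
      rw [hT, Finset.card_image_of_injective _ σ.injective, Finset.card_filter]
      rw [Fin.sum_univ_eq_sum_range (fun i => if t ≤ i then (1:ℕ) else 0) N,
        ← Finset.card_filter]
      have : (range N).filter (fun i => t ≤ i) = Ico t N := by
        ext i; simp [Finset.mem_Ico]; omega
      rw [this, Nat.card_Ico]
    have hsumT : ∑ i ∈ T, s i = ∑ i ∈ Ico t N, a i := by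
      rw [hT, Finset.sum_image (fun x _ y _ h => σ.injective h), Finset.sum_filter]
      have : ∀ j : Fin N, (if t ≤ j.val then s (σ j) else 0)
          = (fun i => if t ≤ i then a i else 0) j.val := by
        intro j; by_cases h : t ≤ j.val <;> simp [h, ha_val]
      rw [Finset.sum_congr rfl fun j _ => this j,
        Fin.sum_univ_eq_sum_range (fun i => if t ≤ i then a i else 0) N,
        ← Finset.sum_filter]
      congr 1
      ext i; simp [Finset.mem_Ico]; omega
    have hsplit : ∑ i ∈ range t, a i + ∑ i ∈ Ico t N, a i = M := by
      rw [← hasum, Finset.range_eq_Ico]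
      rw [Finset.range_eq_Ico]; exact Finset.sum_Ico_consecutive a (Nat.zero_le t) ht
    have hb := hbound T (N - t) hcard
    rw [hsumT] at hb
    have hNt : N - (N - t) = t := by omega
    rw [hNt] at hb
    have h2 : 2 * ((N-t) * ((N-t) - 1) / 2) = (N-t)*((N-t)-1) := even_half (N-t)
    have h3 : (∑ i ∈ range t, i) * 2 = t * (t - 1) := Finset.sum_range_id_mul_two t
    have h4 := quad_id t (N - t)
    have h5 : t + (N - t) = N := by omega
    rw [h5] at h4
    have h6 : (N-t)*t = t*(N-t) := Nat.mul_comm _ _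
    omega
  have htot : ∑ i ∈ range N, i = M := by
    have := Finset.sum_range_id_mul_two N
    omega
  have hMpos : (0:ℝ) < (M:ℝ) := by
    have h2N : 2 * 1 ≤ N * (N - 1) := Nat.mul_le_mul hN (by omega)
    have : 1 ≤ M := by omega
    exact_mod_cast Nat.lt_of_lt_of_le Nat.zero_lt_one this
  set c : ℕ → ℝ := fun i => -Real.log (max (a i : ℝ) 1 / M) - 1 with hc_def
  set d : ℕ → ℝ := fun i => (i : ℝ) - (a i : ℝ) with hd_def
  have habel : ∑ i ∈ range N, c i * d i ≤ 0 := by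
    apply abel_nonpos
    · intro i hi
      have hmono : a i ≤ a (i+1) := ha_mono i (i+1) (Nat.le_succ i) hi
      have h1 : max (a i:ℝ) 1 ≤ max (a (i+1):ℝ) 1 :=
        max_le_max (by exact_mod_cast hmono) le_rfl
      have hlog : Real.log (max (a i:ℝ) 1 / M) ≤ Real.log (max (a (i+1):ℝ) 1 / M) := by
        apply Real.log_le_log (by positivity)
        gcongr
      simp only [hc_def]
      linarith
    · intro t ht
      simp only [hd_def]
      rw [Finset.sum_sub_distrib]
      have := hpref t ht
      have hcast : ((∑ i ∈ range t, i : ℕ) : ℝ) ≤ ((∑ i ∈ range t, a i : ℕ) : ℝ) :=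
        Nat.cast_le.2 this
      push_cast at hcast
      linarith
    · simp only [hd_def]
      rw [Finset.sum_sub_distrib]
      have h1 : ((∑ i ∈ range N, i : ℕ) : ℝ) = (M:ℝ) := Nat.cast_inj.2 htot
      have h2 : ((∑ i ∈ range N, a i : ℕ) : ℝ) = (M:ℝ) := Nat.cast_inj.2 hasum
      push_cast at h1 h2
      rw [h1, h2, sub_self]
  have hterm : ∀ i ∈ range N, Real.negMulLog ((i:ℝ)/M) ≤
      Real.negMulLog ((a i:ℝ)/M) + c i * (d i / M) := by
    intro i hi
    rw [Finset.mem_range] at hi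
    by_cases h0 : a i = 0
    · have hi0 : i = 0 := by
        by_contra hne
        have hp := hpref (i+1) (by omega)
        have hz : ∑ j ∈ range (i+1), a j = 0 := by
          apply Finset.sum_eq_zero
          intro j hj
          rw [Finset.mem_range] at hj
          have := ha_mono j i (by omega) hi
          omega
        have hle : i ≤ ∑ j ∈ range (i+1), j :=
          Finset.single_le_sum (f := fun j => j) (fun _ _ => Nat.zero_le _)
            (Finset.self_mem_range_succ i)
        omega
      subst hi0
      simp [hd_def, h0, Real.negMulLog_zero]
    · have h1 : (1:ℝ) ≤ (a i : ℝ) := by exact_mod_cast Nat.one_le_iff_ne_zero.2 h0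
      have hmax : max (a i:ℝ) 1 = (a i:ℝ) := max_eq_left h1
      have hx : (0:ℝ) < (a i:ℝ)/M := by positivity
      have hy : (0:ℝ) ≤ (i:ℝ)/M := by positivity
      have htan := tangent_negMulLog hx hy
      have hceq : c i = -Real.log ((a i:ℝ)/M) - 1 := by simp [hc_def, hmax]
      have hde : d i / M = (i:ℝ)/M - (a i:ℝ)/M := by simp only [hd_def]; ring
      rw [hceq, hde]
      exact htan
  have hmain : ∑ i ∈ range N, Real.negMulLog ((i:ℝ)/M) ≤
      ∑ i ∈ range N, Real.negMulLog ((a i:ℝ)/M) := by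
    have hsum_le := Finset.sum_le_sum hterm
    rw [Finset.sum_add_distrib] at hsum_le
    have heq : ∑ i ∈ range N, c i * (d i / M) = (∑ i ∈ range N, c i * d i) / M := by
      rw [Finset.sum_div]
      exact Finset.sum_congr rfl fun i _ => by ring
    have : (∑ i ∈ range N, c i * d i) / M ≤ 0 := div_nonpos_of_nonpos_of_nonneg habel hMpos.le
    rw [heq] at hsum_le
    linarith
  have hL : ∑ t ∈ Finset.Icc 1 (N-1), Real.negMulLog ((t:ℝ)/M)
      = ∑ t ∈ range N, Real.negMulLog ((t:ℝ)/M) := by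
    have he : Finset.Icc 1 (N-1) = (range N).erase 0 := by
      ext i; simp [Finset.mem_Icc]; omega
    rw [he, Finset.sum_erase]
    simp
  have hR : ∑ i, Real.negMulLog ((s i : ℝ)/M) = ∑ i ∈ range N, Real.negMulLog ((a i:ℝ)/M) := by
    rw [← Equiv.sum_comp σ (fun i => Real.negMulLog ((s i : ℝ)/M)),
      ← Fin.sum_univ_eq_sum_range (fun i => Real.negMulLog ((a i:ℝ)/M)) N]
    exact Finset.sum_congr rfl fun i _ => by rw [ha_val i]
  rw [hL, hR]
  exact hmain
end

section
/- Let N ≥ 2, M = N(N−1)/2, and let W = {w₁, w₂} with p(w₁) = p(w₂) = 1/2. Define σ on 2-element subsets P of Fin N by σ(P, w₁) = min P and σ(P, w₂) = max P. Then (W, p, σ) is a distortion-free pair-assignment scheme, its conditional entropy ∑_{w ∈ W} p(w) · ∑_{x ∈ Fin N} negMulLog((1/M)·|{P : σ(P,w) = x}|) equals ∑_{t=1}^{N−1} negMulLog(t/M), and its mutual-information value I(W,p,σ) = ∑_x negMulLog(μ(x)) − ∑_w p(w) ∑_x negMulLog(ν_w(x)) equals log N − ∑_{t=1}^{N−1}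 negMulLog(t/M). -/
open Real Finset

/-- A 2-element subset of `Fin N` is nonempty. -/
theorem pair_nonempty {N : ℕ} (P : {P : Finset (Fin N) // P.card = 2}) : P.1.Nonempty :=
  Finset.card_pos.mp (by rw [P.2]; norm_num)

/-- The min/max selection map: `σ(P, w₁) = min P` (for `w = false`) and
`σ(P, w₂) = max P` (for `w = true`). -/
def minMaxSelect {N : ℕ} (P : {P : Finset (Fin N) // P.card = 2}) (w : Bool) : Fin N :=
  if w then P.1.max' (pair_nonempty P) else P.1.min' (pair_nonempty P)

lemma min'_pair {α : Type*} [LinearOrder α] [DecidableEq α] {a b : α} (h : a < b)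
    (H : ({a, b} : Finset α).Nonempty) : ({a, b} : Finset α).min' H = a := by
  apply le_antisymm (Finset.min'_le _ _ (by simp))
  apply Finset.le_min'
  intro y hy
  rcases Finset.mem_insert.mp hy with rfl | hy
  · exact le_rfl
  · rw [Finset.mem_singleton.mp hy]; exact h.le

lemma max'_pair {α : Type*} [LinearOrder α] [DecidableEq α] {a b : α} (h : a < b)
    (H : ({a, b} : Finset α).Nonempty) : ({a, b} : Finset α).max' H = b := by
  apply le_antisymm
  · apply Finset.max'_le
    intro y hy
    rcases Finset.mem_insert.mp hy with rfl | hy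
    · exact h.le
    · rw [Finset.mem_singleton.mp hy]
  · exact Finset.le_max' _ _ (by simp)

lemma pair_eq' {α : Type*} [LinearOrder α] [DecidableEq α] {s : Finset α} (h : s.card = 2)
    (hne : s.Nonempty) : s = {s.min' hne, s.max' hne} := by
  have h1 : 1 < s.card := by omega
  have hlt := Finset.min'_lt_max'_of_card s h1
  refine (Finset.eq_of_subset_of_card_le (fun x hx => ?_) ?_).symm
  · rcases Finset.mem_insert.mp hx with rfl | hx
    · exact Finset.min'_mem _ _
    · rw [Finset.mem_singleton.mp hx]; exact Finset.max'_mem _ _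
  · rw [h, Finset.card_insert_of_notMem (by simp [hlt.ne]), Finset.card_singleton]

lemma card_max_filter {N : ℕ} (x : Fin N) :
    (Finset.univ.filter
      (fun P : {P : Finset (Fin N) // P.card = 2} => minMaxSelect P true = x)).card = x.val := by
  rw [← Fin.card_Iio (b := x)]
  refine Finset.card_bij' (fun P _ => P.1.min' (pair_nonempty P))
    (fun y hy => ⟨{y, x}, Finset.card_eq_two.mpr ⟨y, x, (Finset.mem_Iio.mp hy).ne, rfl⟩⟩)
    ?hi ?hj ?li ?ri
  case hi =>
    intro P hP
    simp only [Finset.mem_filter, minMaxSelect, if_true] at hP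
    rw [Finset.mem_Iio]
    have := Finset.min'_lt_max'_of_card P.1 (show 1 < P.1.card by rw [P.2]; norm_num)
    rwa [hP.2] at this
  case hj =>
    intro y hy
    simp only [Finset.mem_filter, Finset.mem_univ, true_and, minMaxSelect, if_true]
    exact max'_pair (Finset.mem_Iio.mp hy) _
  case li =>
    intro P hP
    simp only [Finset.mem_filter, minMaxSelect, if_true] at hP
    apply Subtype.ext
    conv_rhs => rw [pair_eq' P.2 (pair_nonempty P)]
    simp only [hP.2]
  case ri =>
    intro y hy
    exact min'_pair (Finset.mem_Iio.mp hy) _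

lemma card_min_filter {N : ℕ} (x : Fin N) :
    (Finset.univ.filter
      (fun P : {P : Finset (Fin N) // P.card = 2} => minMaxSelect P false = x)).card
      = N - 1 - x.val := by
  rw [← Fin.card_Ioi (a := x)]
  refine Finset.card_bij' (fun P _ => P.1.max' (pair_nonempty P))
    (fun y hy => ⟨{x, y}, Finset.card_eq_two.mpr ⟨x, y, (Finset.mem_Ioi.mp hy).ne, rfl⟩⟩)
    ?hi ?hj ?li ?ri
  case hi =>
    intro P hP
    simp only [Finset.mem_filter, minMaxSelect, Bool.false_eq_true, if_false] at hP
    rw [Finset.mem_Ioi]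
    have := Finset.min'_lt_max'_of_card P.1 (show 1 < P.1.card by rw [P.2]; norm_num)
    rwa [hP.2] at this
  case hj =>
    intro y hy
    simp only [Finset.mem_filter, Finset.mem_univ, true_and, minMaxSelect, Bool.false_eq_true,
      if_false]
    exact min'_pair (Finset.mem_Ioi.mp hy) _
  case li =>
    intro P hP
    simp only [Finset.mem_filter, minMaxSelect, Bool.false_eq_true, if_false] at hP
    apply Subtype.ext
    conv_rhs => rw [pair_eq' P.2 (pair_nonempty P)]
    simp only [hP.2]
  case ri =>
    intro y hy
    exact max'_pair (Finset.mem_Ioi.mp hy) _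

/-- The two-letter scheme `W = {w₁, w₂}` with `p ≡ 1/2`, `σ(P,w₁) = min P`,
`σ(P,w₂) = max P` is a distortion-free pair-assignment scheme; its conditional entropy
equals `∑_{t=1}^{N−1} negMulLog (t/M)` and its mutual-information value equals
`log N − ∑_{t=1}^{N−1} negMulLog (t/M)`, where `M = N(N−1)/2`. -/
theorem minMax_scheme_achieves_capacity (N : ℕ) (hN : 2 ≤ N) (M : ℕ)
    (hM : M = N * (N - 1) / 2) :
    let p : Bool → ℝ := fun _ => 1 / 2
    let ν : Bool → Fin N → ℝ := fun w x =>
      (1 / (M : ℝ)) *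
        ((Finset.univ.filter
          (fun P : {P : Finset (Fin N) // P.card = 2} => minMaxSelect P w = x)).card : ℝ)
    let μ : Fin N → ℝ := fun x => ∑ w, p w * ν w x
    -- it is a pair-assignment scheme:
    (∀ w, 0 ≤ p w) ∧ (∑ w, p w = 1) ∧
    (∀ (P : {P : Finset (Fin N) // P.card = 2}) (w : Bool), minMaxSelect P w ∈ P.1) ∧
    -- it is distortion-free:
    (∀ (P : {P : Finset (Fin N) // P.card = 2}) (x : Fin N), x ∈ P.1 →
      ∑ w ∈ Finset.univ.filter (fun w : Bool => minMaxSelect P w = x), p w = 1 / 2) ∧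
    -- its conditional entropy:
    (∑ w, p w * ∑ x, Real.negMulLog (ν w x)) =
      (∑ t ∈ Finset.Icc 1 (N - 1), Real.negMulLog ((t : ℝ) / (M : ℝ))) ∧
    -- its mutual-information value:
    ((∑ x, Real.negMulLog (μ x)) - ∑ w, p w * ∑ x, Real.negMulLog (ν w x)) =
      Real.log N - ∑ t ∈ Finset.Icc 1 (N - 1), Real.negMulLog ((t : ℝ) / (M : ℝ)) := by
  intro p ν μ
  -- basic arithmetic facts
  have h2dvd : 2 ∣ N * (N - 1) := by
    rcases Nat.even_or_odd N with h | h
    · exact Dvd.dvd.mul_right h.two_dvd _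
    · exact Dvd.dvd.mul_left (Nat.Odd.sub_odd h odd_one).two_dvd _
  have hM2 : 2 * M = N * (N - 1) := by rw [hM, Nat.mul_div_cancel' h2dvd]
  have hNN : 2 ≤ N * (N - 1) := by
    have := Nat.mul_le_mul hN (show 1 ≤ N - 1 by omega); omega
  have hMpos : 0 < M := by omega
  have hMne : (M : ℝ) ≠ 0 := Nat.cast_ne_zero.mpr hMpos.ne'
  have hNne : (N : ℝ) ≠ 0 := Nat.cast_ne_zero.mpr (by omega)
  have hM2R : (2 : ℝ) * M = N * ((N : ℝ) - 1) := by
    have := congrArg (Nat.cast : ℕ → ℝ) hM2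
    push_cast [Nat.cast_sub (by omega : 1 ≤ N)] at this
    linarith
  -- the rows
  have hνt : ∀ x : Fin N, ν true x = (x.val : ℝ) / M := by
    intro x; simp only [ν, card_max_filter]; ring
  have hνf : ∀ x : Fin N, ν false x = ((N : ℝ) - 1 - x.val) / M := by
    intro x
    simp only [ν, card_min_filter]
    rw [Nat.cast_sub (by omega : x.val ≤ N - 1), Nat.cast_sub (by omega : 1 ≤ N)]
    push_cast; ring
  -- sums of negMulLog over rows
  have hrange : ∀ f : ℕ → ℝ, f 0 = 0 →
      ∑ t ∈ Finset.range N, f t = ∑ t ∈ Finset.Icc 1 (N - 1), f t := by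
    intro f h0
    have hI : Finset.Icc 1 (N - 1) = Finset.Ico 1 N := by
      rw [← Finset.Ico_add_one_right_eq_Icc]; congr 1; omega
    rw [hI, Finset.range_eq_Ico, Finset.sum_eq_sum_Ico_succ_bot (by omega : 0 < N), h0, zero_add]
  have hSt : ∑ x : Fin N, Real.negMulLog (ν true x) =
      ∑ t ∈ Finset.Icc 1 (N - 1), Real.negMulLog ((t : ℝ) / M) := by
    simp only [hνt]
    rw [Fin.sum_univ_eq_sum_range (fun t => Real.negMulLog ((t : ℝ) / M)) N]
    exact hrange _ (by simp [Real.negMulLog])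
  have hSf : ∑ x : Fin N, Real.negMulLog (ν false x) =
      ∑ t ∈ Finset.Icc 1 (N - 1), Real.negMulLog ((t : ℝ) / M) := by
    simp only [hνf]
    have key : ∀ x : Fin N, ((N : ℝ) - 1 - x.val) / M = ((N - 1 - x.val : ℕ) : ℝ) / M := by
      intro x
      rw [Nat.cast_sub (by omega : x.val ≤ N - 1), Nat.cast_sub (by omega : 1 ≤ N)]
      push_cast; ring_nf
    simp only [key]
    rw [Fin.sum_univ_eq_sum_range (fun t => Real.negMulLog (((N - 1 - t : ℕ) : ℝ) / M)) N]
    rw [Finset.sum_range_reflect (fun t => Real.negMulLog ((t : ℝ) / M)) N]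
    exact hrange _ (by simp [Real.negMulLog])
  have hcond : (∑ w, p w * ∑ x, Real.negMulLog (ν w x)) =
      ∑ t ∈ Finset.Icc 1 (N - 1), Real.negMulLog ((t : ℝ) / M) := by
    rw [Fintype.sum_bool, hSt, hSf]
    simp only [p]; ring
  have hμ : ∀ x : Fin N, μ x = 1 / N := by
    intro x
    simp only [μ, Fintype.sum_bool, hνt x, hνf x, p]
    field_simp
    nlinarith [hM2R]
  have hμsum : ∑ x : Fin N, Real.negMulLog (μ x) = Real.log N := by
    simp only [hμ]
    rw [Finset.sum_const, Finset.card_univ, Fintype.card_fin, nsmul_eq_mul]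
    rw [Real.negMulLog, one_div, Real.log_inv]
    field_simp
  refine ⟨fun w => by norm_num [p], by rw [Fintype.sum_bool]; norm_num [p], ?_, ?_, hcond,
    by rw [hμsum, hcond]⟩
  · intro P w
    cases w
    · simpa [minMaxSelect] using Finset.min'_mem _ (pair_nonempty P)
    · simpa [minMaxSelect] using Finset.max'_mem _ (pair_nonempty P)
  · intro P x hx
    have hlt := Finset.min'_lt_max'_of_card P.1 (show 1 < P.1.card by rw [P.2]; norm_num)
    have hx' : x = P.1.min' (pair_nonempty P) ∨ x = P.1.max' (pair_nonempty P) := by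
      rw [pair_eq' P.2 (pair_nonempty P)] at hx
      simpa using hx
    rw [Finset.sum_filter, Fintype.sum_bool]
    simp only [minMaxSelect, if_true, Bool.false_eq_true, if_false]
    rcases hx' with rfl | rfl
    · rw [if_neg hlt.ne', if_pos rfl]
      simp [p]
    · rw [if_pos rfl, if_neg hlt.ne]
      simp [p]
end

section
/- Let N ≥ 1 and define the angular distance d(θ₁, θ₂) = min(|θ₁ − θ₂|, 2π − |θ₁ − θ₂|) for θ₁, θ₂ ∈ [0, 2π). Then the map from Fin N to ℝ given by k ↦ d(2πk/N, π/(2N)) is injective, and its image equals the set {π(2a+1)/(2N) : a ∈ Fin N}. -/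
open Real

/-- With the angular distance `d(θ₁,θ₂) = min(|θ₁−θ₂|, 2π−|θ₁−θ₂|)`, the map
`k ↦ d(2πk/N, π/(2N))` on `Fin N` is injective and its image is exactly the set of odd
multiples `π(2a+1)/(2N)` for `a ∈ Fin N`. -/
theorem angular_distances_distinct (N : ℕ) (hN : 1 ≤ N) :
    let d : ℝ → ℝ → ℝ := fun θ₁ θ₂ => min |θ₁ - θ₂| (2 * π - |θ₁ - θ₂|)
    Function.Injective
      (fun k : Fin N => d (2 * π * (k : ℝ) / (N : ℝ)) (π / (2 * (N : ℝ)))) ∧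
    Set.range
        (fun k : Fin N => d (2 * π * (k : ℝ) / (N : ℝ)) (π / (2 * (N : ℝ)))) =
      {x : ℝ | ∃ a : Fin N, x = π * (2 * (a : ℝ) + 1) / (2 * (N : ℝ))} := by
  intro d
  have hπ := Real.pi_pos
  have hNR : (0:ℝ) < (N:ℝ) := by exact_mod_cast hN
  -- the explicit index bijection
  set g : Fin N → Fin N := fun k =>
    if h : 2 * (k:ℕ) ≤ N then ⟨2 * (k:ℕ) - 1, by have := k.isLt; omega⟩
    else ⟨2 * (N - (k:ℕ)), by have := k.isLt; omega⟩ with hg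
  have hginj : Function.Injective g := by
    intro a b hab
    have ha := a.isLt; have hb := b.isLt
    rw [hg] at hab
    simp only [] at hab
    apply Fin.ext
    split_ifs at hab <;> simp only [Fin.mk.injEq] at hab <;> omega
  have hgsurj : Function.Surjective g := Finite.surjective_of_injective hginj
  -- the key computation
  have key : ∀ k : Fin N,
      d (2 * π * (k : ℝ) / (N : ℝ)) (π / (2 * (N : ℝ)))
        = π * (2 * ((g k : ℕ) : ℝ) + 1) / (2 * (N : ℝ)) := by
    intro k
    have hk := k.isLt
    by_cases h0 : (k:ℕ) = 0
    · have hgk : ((g k : ℕ) : ℝ) = 0 := by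
        rw [hg]; simp only [h0]
        split_ifs <;> simp <;> omega
      rw [hgk, h0]
      simp only [d, Nat.cast_zero, mul_zero, zero_div, zero_sub, abs_neg]
      have hpos : (0:ℝ) ≤ π / (2 * N) := by positivity
      have h1 : π / (2 * (N:ℝ)) ≤ π := by
        rw [div_le_iff₀ (by positivity)]
        have h1 : (1:ℝ) ≤ (N:ℝ) := by exact_mod_cast hN
        nlinarith
      rw [abs_of_nonneg hpos, min_eq_left (by linarith)]
      ring
    · have hk1 : 1 ≤ (k:ℕ) := by omega
      have ht : 2 * π * (k:ℝ) / N - π / (2 * N) = π * (4 * (k:ℝ) - 1) / (2 * N) := by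
        field_simp; ring
      have hkR : (1:ℝ) ≤ (k:ℝ) := by exact_mod_cast hk1
      have htpos : (0:ℝ) ≤ π * (4 * (k:ℝ) - 1) / (2 * N) := by
        apply div_nonneg _ (by positivity)
        nlinarith
      by_cases h : 2 * (k:ℕ) ≤ N
      · have hgk : ((g k : ℕ) : ℝ) = 2 * (k:ℝ) - 1 := by
          rw [hg]; simp only [dif_pos h]
          push_cast [Nat.cast_sub (by omega : 1 ≤ 2 * (k:ℕ))]
          ring
        have hle : (4 * (k:ℝ) - 1) ≤ 2 * N := by
          have : (2 * (k:ℕ) : ℝ) ≤ N := by exact_mod_cast h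
          push_cast at this; nlinarith
        have hT : π * (4 * (k:ℝ) - 1) / (2 * N) ≤ π := by
          rw [div_le_iff₀ (by positivity)]
          nlinarith
        simp only [d, ht, abs_of_nonneg htpos]
        rw [min_eq_left (by linarith), hgk]
        ring
      · have hgt : (N:ℝ) < 2 * (k:ℝ) := by
          have : (N:ℝ) < (2 * (k:ℕ) : ℝ) := by exact_mod_cast Nat.lt_of_not_le h
          push_cast at this; linarith
        have hgk : ((g k : ℕ) : ℝ) = 2 * ((N:ℝ) - (k:ℝ)) := by
          rw [hg]; simp only [dif_neg h]
          push_cast [Nat.cast_sub (by omega : (k:ℕ) ≤ N)]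
          ring
        have hgt2 : (N:ℝ) + 1 ≤ 2 * (k:ℝ) := by
          have : N + 1 ≤ 2 * (k:ℕ) := by omega
          exact_mod_cast this
        have hT : π ≤ π * (4 * (k:ℝ) - 1) / (2 * N) := by
          rw [le_div_iff₀ (by positivity)]
          nlinarith
        simp only [d, ht, abs_of_nonneg htpos]
        rw [min_eq_right (by linarith), hgk]
        field_simp; ring
  -- injectivity of the ideal value map
  have hιinj : ∀ a b : ℕ, π * (2 * (a:ℝ) + 1) / (2 * N) = π * (2 * (b:ℝ) + 1) / (2 * N) → a = b := by
    intro a b hab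
    have hN0 : (N:ℝ) ≠ 0 := ne_of_gt hNR
    field_simp at hab
    exact_mod_cast (by linarith : (a:ℝ) = b)
  constructor
  · intro a b hab
    simp only [key] at hab
    exact hginj (Fin.ext (hιinj _ _ hab))
  · ext x
    simp only [Set.mem_range, Set.mem_setOf_eq]
    constructor
    · rintro ⟨k, rfl⟩
      exact ⟨g k, key k⟩
    · rintro ⟨a, rfl⟩
      obtain ⟨k, hk⟩ := hgsurj a
      exact ⟨k, by rw [key k, hk]⟩
end

section
/- Let N ≥ 2 be even and let i ≠ j be elements of Fin N. Define the angular distance d(θ₁, θ₂) = min(|θ₁ − θ₂|, 2π − |θ₁ − θ₂|), token angles θ_k = 2πk/N, and shifted angles z_v = 2πv/N + π/(2N) for v ∈ Fin N. Then for every v, d(z_v, θ_i) ≠ d(z_v, θ_j), and |{v ∈ Fin N : d(z_v, θ_i) < d(z_v, θ_j)}| = N/2. -/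
open Real Finset

private lemma circ_mem (a : ℝ) (h : |a| ≤ 2*π) :
    min |a| (2*π - |a|) ∈ Set.Icc 0 π := by
  constructor
  · exact le_min (abs_nonneg a) (by linarith)
  · rcases le_total |a| (2*π - |a|) with h' | h'
    · rw [min_eq_left h']; linarith
    · rw [min_eq_right h']; linarith

private lemma circ_cos (a : ℝ) : Real.cos (min |a| (2*π - |a|)) = Real.cos a := by
  rcases le_total |a| (2*π - |a|) with h' | h'
  · rw [min_eq_left h', Real.cos_abs]
  · rw [min_eq_right h', Real.cos_sub]
    simp [Real.cos_two_pi, Real.sin_two_pi, Real.cos_abs]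

/-- For even `N ≥ 2` and distinct tokens `i ≠ j` in `Fin N`, with token angles
`θ_k = 2πk/N` and shifted channel-input angles `z_v = 2πv/N + π/(2N)`, no `z_v` is
equidistant from `θ_i` and `θ_j`, and exactly `N/2` of the `z_v` are strictly closer to
`θ_i` than to `θ_j`. -/
theorem nearest_token_distortion_free (N : ℕ) (hN : 2 ≤ N) (hNeven : Even N)
    (i j : Fin N) (hij : i ≠ j) :
    let d : ℝ → ℝ → ℝ := fun θ₁ θ₂ => min |θ₁ - θ₂| (2 * π - |θ₁ - θ₂|)
    let θ : Fin N → ℝ := fun k => 2 * π * (k : ℝ) / (N : ℝ)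
    let z : Fin N → ℝ := fun v => 2 * π * (v : ℝ) / (N : ℝ) + π / (2 * (N : ℝ))
    (∀ v : Fin N, d (z v) (θ i) ≠ d (z v) (θ j)) ∧
    (Finset.univ.filter (fun v : Fin N => d (z v) (θ i) < d (z v) (θ j))).card = N / 2 := by
  intro d θ z
  obtain ⟨m, hm⟩ := hNeven
  have hm1 : 1 ≤ m := by omega
  have hN0 : (0:ℝ) < N := by positivity
  have hNm : (N:ℝ) = 2 * m := by rw [hm]; push_cast; ring
  have hpi := Real.pi_pos
  -- bounds
  have hθb : ∀ k : Fin N, 0 ≤ θ k ∧ θ k ≤ 2*π := by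
    intro k
    have hk : ((k:ℕ):ℝ) < N := by exact_mod_cast k.isLt
    have hk0 : (0:ℝ) ≤ ((k:ℕ):ℝ) := Nat.cast_nonneg _
    constructor
    · simp only [θ]; positivity
    · simp only [θ]
      rw [div_le_iff₀ hN0]
      nlinarith
  have hzb : ∀ v : Fin N, 0 ≤ z v ∧ z v ≤ 2*π := by
    intro v
    have hk : ((v:ℕ):ℝ) < N := by exact_mod_cast v.isLt
    have hk0 : (0:ℝ) ≤ ((v:ℕ):ℝ) := Nat.cast_nonneg _
    constructor
    · simp only [z]; positivity
    · simp only [z]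
      rw [← sub_nonneg]
      have hv1 : ((v:ℕ):ℝ) ≤ (N:ℝ) - 1 := by
        have : (v:ℕ) + 1 ≤ N := v.isLt
        have := (Nat.cast_le (α := ℝ)).mpr this
        push_cast at this
        linarith
      have heq : 2*π - (2 * π * ((v:ℕ):ℝ) / N + π / (2 * (N:ℝ)))
          = π * (4*(N:ℝ) - 4*((v:ℕ):ℝ) - 1) / (2*(N:ℝ)) := by
        field_simp
        ring
      rw [heq]
      apply div_nonneg _ (by positivity)
      apply mul_nonneg (le_of_lt hpi)
      linarith
  have habs : ∀ (v k : Fin N), |z v - θ k| ≤ 2*π := by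
    intro v k
    obtain ⟨h1, h2⟩ := hzb v
    obtain ⟨h3, h4⟩ := hθb k
    rw [abs_le]; constructor <;> linarith
  -- d comparisons via cos
  have hdlt : ∀ (v : Fin N) (k l : Fin N),
      (d (z v) (θ k) < d (z v) (θ l) ↔ Real.cos (z v - θ l) < Real.cos (z v - θ k)) := by
    intro v k l
    have h1 := circ_mem _ (habs v k)
    have h2 := circ_mem _ (habs v l)
    have key := Real.strictAntiOn_cos.lt_iff_gt h2 h1
    rw [circ_cos, circ_cos] at key
    simp only [d]
    exact key.symm
  -- the midpoint sine function
  set A : ℕ → ℝ := fun w =>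
    π * (4*(w:ℝ) + 1 - 2*((i:ℕ):ℝ) - 2*((j:ℕ):ℝ)) / (2*(N:ℝ)) with hA
  have harg : ∀ v : Fin N, z v - (θ i + θ j)/2 = A (v:ℕ) := by
    intro v
    simp only [z, θ, hA]
    field_simp
    ring
  have hdiff : ∀ v : Fin N,
      Real.cos (z v - θ i) - Real.cos (z v - θ j)
        = -2 * Real.sin (A (v:ℕ)) * Real.sin ((θ j - θ i)/2) := by
    intro v
    rw [Real.cos_sub_cos]
    rw [show ((z v - θ i) + (z v - θ j))/2 = z v - (θ i + θ j)/2 by ring,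
        show ((z v - θ i) - (z v - θ j))/2 = (θ j - θ i)/2 by ring,
        harg v]
  -- nonvanishing
  have hSne : ∀ v : Fin N, Real.sin (A (v:ℕ)) ≠ 0 := by
    intro v h
    rw [Real.sin_eq_zero_iff] at h
    obtain ⟨n, hn⟩ := h
    simp only [hA] at hn
    have hpi' : (π:ℝ) ≠ 0 := ne_of_gt hpi
    have h2 : (n:ℝ) * (2*(N:ℝ)) = 4*((v:ℕ):ℝ) + 1 - 2*((i:ℕ):ℝ) - 2*((j:ℕ):ℝ) := by
      field_simp at hn
      nlinarith [hn]
    have h3 : (n:ℤ) * (2*(N:ℤ)) = 4*((v:ℕ):ℤ) + 1 - 2*((i:ℕ):ℤ) - 2*((j:ℕ):ℤ) := by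
      exact_mod_cast h2
    obtain ⟨k, hk⟩ : (2:ℤ) ∣ (4*((v:ℕ):ℤ) + 1 - 2*((i:ℕ):ℤ) - 2*((j:ℕ):ℤ)) := by
      rw [← h3]; exact ⟨n * (N:ℤ), by ring⟩
    omega
  have hEne : Real.sin ((θ j - θ i)/2) ≠ 0 := by
    intro h
    rw [Real.sin_eq_zero_iff] at h
    obtain ⟨n, hn⟩ := h
    simp only [θ] at hn
    have h2 : (n:ℝ) * (N:ℝ) = ((j:ℕ):ℝ) - ((i:ℕ):ℝ) := by
      field_simp at hn
      nlinarith [hn]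
    have h3 : (n:ℤ) * (N:ℤ) = ((j:ℕ):ℤ) - ((i:ℕ):ℤ) := by exact_mod_cast h2
    have hij' : (i:ℕ) ≠ (j:ℕ) := fun hh => hij (Fin.ext hh)
    have hiN : ((i:ℕ):ℤ) < (N:ℤ) := by exact_mod_cast i.isLt
    have hjN : ((j:ℕ):ℤ) < (N:ℤ) := by exact_mod_cast j.isLt
    have hi0 : (0:ℤ) ≤ ((i:ℕ):ℤ) := Int.ofNat_nonneg _
    have hj0 : (0:ℤ) ≤ ((j:ℕ):ℤ) := Int.ofNat_nonneg _
    have hijZ : ((i:ℕ):ℤ) ≠ ((j:ℕ):ℤ) := by exact_mod_cast hij'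
    have hNZ : (0:ℤ) < (N:ℤ) := by exact_mod_cast (show 0 < N by omega)
    rcases lt_trichotomy n 0 with hn' | hn' | hn'
    · have h4 : n * (N:ℤ) ≤ (-1) * (N:ℤ) :=
        mul_le_mul_of_nonneg_right (by omega) (le_of_lt hNZ)
      linarith
    · rw [hn', zero_mul] at h3
      omega
    · have h4 : (1:ℤ) * (N:ℤ) ≤ n * (N:ℤ) :=
        mul_le_mul_of_nonneg_right (by omega) (le_of_lt hNZ)
      linarith
  -- part 1
  have part1 : ∀ v : Fin N, d (z v) (θ i) ≠ d (z v) (θ j) := by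
    intro v h
    have h1 : Real.cos (z v - θ i) = Real.cos (z v - θ j) := by
      have := congrArg Real.cos h
      simp only [d] at this
      rwa [circ_cos, circ_cos] at this
    have h2 := hdiff v
    rw [h1] at h2
    rw [sub_self] at h2
    exact mul_ne_zero (hSne v) hEne (by linarith [h2])
  refine ⟨part1, ?_⟩
  -- the involution
  have hmN : m < N := by omega
  set c : Fin N := ⟨m, hmN⟩ with hc
  set e : Fin N → Fin N := fun v => v + c with he
  have heval : ∀ v : Fin N, ((e v : Fin N) : ℕ) = ((v:ℕ) + m) % N := by
    intro v
    simp [he, hc, Fin.add_def]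
  have hinv : ∀ v : Fin N, e (e v) = v := by
    intro v
    apply Fin.ext
    rw [heval, heval, Nat.mod_add_mod,
      show (v:ℕ) + m + m = (v:ℕ) + N by omega,
      Nat.add_mod_right, Nat.mod_eq_of_lt v.isLt]
  have hflipA : ∀ v : Fin N, Real.sin (A ((e v : Fin N) : ℕ)) = - Real.sin (A (v:ℕ)) := by
    intro v
    rw [heval]
    rcases Nat.lt_or_ge ((v:ℕ) + m) N with hlt | hge
    · rw [Nat.mod_eq_of_lt hlt]
      have : A ((v:ℕ) + m) = A (v:ℕ) + π := by
        simp only [hA]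
        rw [hNm]
        have hm0 : (0:ℝ) < (m:ℝ) := by exact_mod_cast hm1
        push_cast
        field_simp
        ring
      rw [this, Real.sin_add_pi]
    · have hlt2 : (v:ℕ) + m - N < N := by omega
      rw [Nat.mod_eq_sub_mod hge, Nat.mod_eq_of_lt hlt2]
      have : A ((v:ℕ) + m - N) = A (v:ℕ) - π := by
        simp only [hA]
        rw [hNm]
        have hm0 : (0:ℝ) < (m:ℝ) := by exact_mod_cast hm1
        have hcast : (((v:ℕ) + m - N : ℕ) : ℝ) = ((v:ℕ):ℝ) + m - N := by
          have : ((v:ℕ) + m - N) + N = (v:ℕ) + m := by omega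
          have h4 := congrArg (fun t : ℕ => (t:ℝ)) this
          push_cast at h4
          linarith
        rw [hcast, hNm]
        field_simp
        ring
      rw [this, Real.sin_sub_pi]
  -- key flip property
  have hkey : ∀ v : Fin N,
      (d (z v) (θ i) < d (z v) (θ j) ↔ ¬ (d (z (e v)) (θ i) < d (z (e v)) (θ j))) := by
    intro v
    rw [hdlt v i j, hdlt (e v) i j]
    have h1 : Real.cos (z v - θ j) < Real.cos (z v - θ i) ↔
        0 < -2 * Real.sin (A (v:ℕ)) * Real.sin ((θ j - θ i)/2) := by
      rw [← hdiff v]; constructor <;> intro <;> linarith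
    have h2 : Real.cos (z (e v) - θ j) < Real.cos (z (e v) - θ i) ↔
        0 < 2 * Real.sin (A (v:ℕ)) * Real.sin ((θ j - θ i)/2) := by
      rw [← sub_pos]
      rw [hdiff (e v), hflipA v]
      constructor <;> intro <;> linarith
    rw [h1, h2]
    have hne := mul_ne_zero (hSne v) hEne
    rcases lt_trichotomy (Real.sin (A (v:ℕ)) * Real.sin ((θ j - θ i)/2)) 0 with h | h | h
    · constructor
      · intro _ h'; nlinarith
      · intro _; nlinarith
    · exact absurd h hne
    · constructor
      · intro h'; nlinarith
      · intro h'; exfalso; exact h' (by nlinarith)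
  -- counting
  classical
  have hcards : (univ.filter (fun v : Fin N => d (z v) (θ i) < d (z v) (θ j))).card
      = (univ.filter (fun v : Fin N => ¬ (d (z v) (θ i) < d (z v) (θ j)))).card := by
    apply Finset.card_bij' (fun v _ => e v) (fun v _ => e v)
    · intro a ha
      simp only [mem_filter, mem_univ, true_and] at ha ⊢
      exact (hkey a).mp ha
    · intro a ha
      simp only [mem_filter, mem_univ, true_and] at ha ⊢
      have := hkey (e a)
      rw [hinv a] at this
      exact this.mpr ha
    · intro a _; exact hinv a
    · intro a _; exact hinv a
  have htotal := Finset.card_filter_add_card_filter_not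
    (p := fun v : Fin N => d (z v) (θ i) < d (z v) (θ j)) (s := univ)
  simp only [Finset.card_univ, Fintype.card_fin] at htotal
  omega
end

section
/- Let N ≥ 2 be even, let i ≠ j be elements of Fin N, and define d(θ₁, θ₂) = min(|θ₁ − θ₂|, 2π − |θ₁ − θ₂|), θ_k = 2πk/N, and z_v = 2πv/N + π/(2N) for v ∈ Fin N. Consider all couplings π : Fin N × {i, j} → ℝ with π ≥ 0, ∑_{x ∈ {i,j}} π(v, x) = 1/N for every v ∈ Fin N, and ∑_{v ∈ Fin N} π(v, x) = 1/2 for each x ∈ {i, j}. Then the coupling π*(v, x) = (1/N) · 1{d(z_v, θ_x) < d(z_v, θ_y)} (where y is the other element of {i,j}) satisfies these marginal constraints and minimizes the transport cost ∑_{v, x} π(v, x) · d(z_v, θ_x) over all such couplings. -/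
open Real Finset


noncomputable def dvAM (N m : ℕ) : ℝ :=
  if 2*m < N then π*(4*(m:ℝ)+1)/(2*(N:ℝ)) else π*(4*(N:ℝ)-4*(m:ℝ)-1)/(2*(N:ℝ))

lemma dvAM_inj (N : ℕ) (hN : 0 < N) {m₁ m₂ : ℕ} (h1 : m₁ < N) (h2 : m₂ < N)
    (h : dvAM N m₁ = dvAM N m₂) : m₁ = m₂ := by
  have hNR : (0:ℝ) < N := by exact_mod_cast hN
  have hπ := Real.pi_pos
  unfold dvAM at h
  have hc : ∀ a b : ℝ, π*a/(2*(N:ℝ)) = π*b/(2*(N:ℝ)) → a = b := by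
    intro a b hab
    have h2N : (2*(N:ℝ)) ≠ 0 := by positivity
    field_simp at hab
    exact hab
  split_ifs at h with ha hb hb
  · have := hc _ _ h
    have : (m₁:ℝ) = m₂ := by linarith
    exact_mod_cast this
  · have := hc _ _ h
    have h4 : 4*(m₁:ℝ) + 4*m₂ + 2 = 4*N := by linarith
    have : 4*m₁ + 4*m₂ + 2 = 4*N := by exact_mod_cast h4
    omega
  · have := hc _ _ h
    have h4 : 4*(m₂:ℝ) + 4*m₁ + 2 = 4*N := by linarith
    have : 4*m₂ + 4*m₁ + 2 = 4*N := by exact_mod_cast h4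
    omega
  · have := hc _ _ h
    have : (m₁:ℝ) = m₂ := by linarith
    exact_mod_cast this

lemma dvAM_half (N m : ℕ) (hN : 0 < N) (hE : Even N) (hm : m < N) :
    dvAM N ((m + N/2) % N) = π - dvAM N m := by
  obtain ⟨k, hk⟩ := hE
  subst hk
  have hk0 : 0 < k := by omega
  have hkR : (0:ℝ) < k := by exact_mod_cast hk0
  have hdiv : (k+k)/2 = k := by omega
  rw [hdiv]
  rcases lt_or_ge m k with hmk | hmk
  · have hmod : (m + k) % (k+k) = m + k := Nat.mod_eq_of_lt (by omega)
    rw [hmod]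
    unfold dvAM
    rw [if_neg (by omega), if_pos (by omega)]
    push_cast
    field_simp
    ring
  · have hmod : (m + k) % (k+k) = m - k := by
      have hle : k + k ≤ m + k := by omega
      rw [Nat.mod_eq_sub_mod hle]
      have he : m + k - (k + k) = m - k := by omega
      rw [he]
      exact Nat.mod_eq_of_lt (by omega)
    rw [hmod]
    unfold dvAM
    rw [if_pos (by omega), if_neg (by omega)]
    have hcast : ((m-k:ℕ):ℝ) = (m:ℝ) - k := by
      push_cast [Nat.cast_sub hmk]
      ring
    rw [hcast]
    push_cast
    field_simp
    ring

lemma minAM (N m : ℕ) (hN : 0 < N) (hm : m < N) :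
    min (π*(4*(m:ℝ)+1)/(2*(N:ℝ))) (2*π - π*(4*(m:ℝ)+1)/(2*(N:ℝ))) = dvAM N m := by
  have hNR : (0:ℝ) < N := by exact_mod_cast hN
  have hπ := Real.pi_pos
  have h2N : (0:ℝ) < 2*N := by positivity
  unfold dvAM
  split_ifs with h
  · apply min_eq_left
    have hc : (4*(m:ℝ)+1) ≤ 2*N := by exact_mod_cast (by omega : 4*m+1 ≤ 2*N)
    have hle : π*(4*(m:ℝ)+1)/(2*(N:ℝ)) ≤ π := by
      rw [div_le_iff₀ h2N]
      nlinarith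
    linarith
  · have hc : (2*(N:ℝ)) ≤ 4*(m:ℝ)+1 := by exact_mod_cast (by omega : 2*N ≤ 4*m+1)
    have hge : π ≤ π*(4*(m:ℝ)+1)/(2*(N:ℝ)) := by
      rw [le_div_iff₀ h2N]
      nlinarith
    rw [min_eq_right (by linarith)]
    field_simp
    ring

lemma mod_small (a N : ℕ) (h : a < 2*N) (hN : 0 < N) :
    a % N = if a < N then a else a - N := by
  split_ifs with h'
  · exact Nat.mod_eq_of_lt h'
  · rw [Nat.mod_eq_sub_mod (by omega)]
    exact Nat.mod_eq_of_lt (by omega)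

lemma dAM_eq (N : ℕ) (hN : 0 < N) (v x : Fin N) :
    min |(2*π*((v:ℕ):ℝ)/(N:ℝ) + π/(2*(N:ℝ))) - 2*π*((x:ℕ):ℝ)/(N:ℝ)|
      (2*π - |(2*π*((v:ℕ):ℝ)/(N:ℝ) + π/(2*(N:ℝ))) - 2*π*((x:ℕ):ℝ)/(N:ℝ)|)
      = dvAM N ((v.1 + (N - x.1)) % N) := by
  have hNR : (0:ℝ) < N := by exact_mod_cast hN
  have hπ := Real.pi_pos
  have hx := x.2
  have hv := v.2
  rcases le_or_gt x.1 v.1 with hxv | hxv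
  · have hm : (v.1 + (N - x.1)) % N = v.1 - x.1 := by
      have he : v.1 + (N - x.1) = N + (v.1 - x.1) := by omega
      rw [he, Nat.add_mod_left, Nat.mod_eq_of_lt (by omega)]
    rw [hm]
    have hcast : ((v.1 - x.1 : ℕ):ℝ) = (v.1:ℝ) - x.1 := by
      push_cast [Nat.cast_sub hxv]; ring
    have hΔ : (2*π*((v:ℕ):ℝ)/(N:ℝ) + π/(2*(N:ℝ))) - 2*π*((x:ℕ):ℝ)/(N:ℝ)
        = π*(4*((v.1 - x.1 : ℕ):ℝ)+1)/(2*(N:ℝ)) := by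
      rw [hcast]; field_simp; ring
    rw [hΔ, abs_of_pos (by positivity)]
    exact minAM N _ hN (by omega)
  · have hm : (v.1 + (N - x.1)) % N = v.1 + (N - x.1) := Nat.mod_eq_of_lt (by omega)
    rw [hm]
    have hcast : ((v.1 + (N - x.1) : ℕ):ℝ) = (v.1:ℝ) + N - x.1 := by
      push_cast [Nat.cast_sub (le_of_lt x.2)]; ring
    set s := π*(4*((v.1 + (N - x.1) : ℕ):ℝ)+1)/(2*(N:ℝ)) with hs
    have hΔ : (2*π*((v:ℕ):ℝ)/(N:ℝ) + π/(2*(N:ℝ))) - 2*π*((x:ℕ):ℝ)/(N:ℝ)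
        = s - 2*π := by
      rw [hs, hcast]; field_simp; ring
    have hlt : (4*((v.1 + (N - x.1) : ℕ):ℝ)+1) < 4*N := by
      exact_mod_cast (by omega : 4*(v.1 + (N - x.1))+1 < 4*N)
    have hs2 : s < 2*π := by
      rw [hs, div_lt_iff₀ (by positivity)]
      nlinarith
    have hs0 : 0 < s := by rw [hs]; positivity
    rw [hΔ, abs_of_neg (by linarith)]
    have h1 : -(s - 2*π) = 2*π - s := by ring
    rw [h1]
    have h2 : 2*π - (2*π - s) = s := by ring
    rw [h2, min_comm]
    exact minAM N _ hN (by omega)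


/-- The explicit solution of ArcMark's optimal transport problem for a two-point uniform
token distribution on `{i, j}` with offset `π/(2N)`: the deterministic coupling
`π*(v,x) = (1/N)·1{d(z_v, θ_x) < d(z_v, θ_y)}` (where `y` is the other element of `{i,j}`)
satisfies the marginal constraints (uniform `1/N` over channel inputs, `1/2` on each of
`i` and `j`) and minimizes the transport cost among all such couplings. -/
theorem arcmark_ot_solution (N : ℕ) (hN : 2 ≤ N) (hNeven : Even N)
    (i j : Fin N) (hij : i ≠ j) :
    let d : ℝ → ℝ → ℝ := fun θ₁ θ₂ => min |θ₁ - θ₂| (2 * π - |θ₁ - θ₂|)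
    let θ : Fin N → ℝ := fun k => 2 * π * (k : ℝ) / (N : ℝ)
    let z : Fin N → ℝ := fun v => 2 * π * (v : ℝ) / (N : ℝ) + π / (2 * (N : ℝ))
    let other : Fin N → Fin N := fun x => if x = i then j else i
    let πstar : Fin N → Fin N → ℝ := fun v x =>
      if d (z v) (θ x) < d (z v) (θ (other x)) then 1 / (N : ℝ) else 0
    -- feasibility of πstar:
    ((∀ v x, 0 ≤ πstar v x) ∧
      (∀ v : Fin N, ∑ x ∈ ({i, j} : Finset (Fin N)), πstar v x = 1 / (N : ℝ)) ∧
      (∀ x ∈ ({i, j} : Finset (Fin N)), ∑ v : Fin N, πstar v x = 1 / 2)) ∧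
    -- optimality of πstar:
    (∀ π' : Fin N → Fin N → ℝ,
      (∀ v x, 0 ≤ π' v x) →
      (∀ v : Fin N, ∑ x ∈ ({i, j} : Finset (Fin N)), π' v x = 1 / (N : ℝ)) →
      (∀ x ∈ ({i, j} : Finset (Fin N)), ∑ v : Fin N, π' v x = 1 / 2) →
      ∑ v : Fin N, ∑ x ∈ ({i, j} : Finset (Fin N)), πstar v x * d (z v) (θ x) ≤
        ∑ v : Fin N, ∑ x ∈ ({i, j} : Finset (Fin N)), π' v x * d (z v) (θ x)) := by
  intro d θ z other πstar
  have hN0 : 0 < N := by omega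
  have hNR : (0:ℝ) < N := by exact_mod_cast hN0
  have hπ := Real.pi_pos
  have hoi : other i = j := by simp [other]
  have hoj : other j = i := by simp [other, (Ne.symm hij)]
  have hd : ∀ v x : Fin N, d (z v) (θ x) = dvAM N ((v.1 + (N - x.1)) % N) := by
    intro v x
    show min |z v - θ x| (2*π - |z v - θ x|) = _
    have hz : z v = 2*π*((v:ℕ):ℝ)/(N:ℝ) + π/(2*(N:ℝ)) := rfl
    have hθ : θ x = 2*π*((x:ℕ):ℝ)/(N:ℝ) := rfl
    rw [hz, hθ]
    exact dAM_eq N hN0 v x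
  have hMlt : ∀ v x : Fin N, (v.1 + (N - x.1)) % N < N := fun v x => Nat.mod_lt _ hN0
  have hdne : ∀ v, d (z v) (θ i) ≠ d (z v) (θ j) := by
    intro v h
    rw [hd v i, hd v j] at h
    have := dvAM_inj N hN0 (hMlt v i) (hMlt v j) h
    have hi2 := i.2; have hj2 := j.2; have hv2 := v.2
    have hij' : i.1 ≠ j.1 := fun h' => hij (Fin.ext h')
    rw [mod_small _ _ (by omega) hN0, mod_small _ _ (by omega) hN0] at this
    revert this
    split_ifs <;> omega
  have hps : ∀ v : Fin N,
      πstar v i = (if d (z v) (θ i) < d (z v) (θ j) then 1/(N:ℝ) else 0) ∧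
      πstar v j = (if d (z v) (θ j) < d (z v) (θ i) then 1/(N:ℝ) else 0) := by
    intro v
    constructor
    · show (if d (z v) (θ i) < d (z v) (θ (other i)) then 1/(N:ℝ) else 0) = _
      rw [hoi]
    · show (if d (z v) (θ j) < d (z v) (θ (other j)) then 1/(N:ℝ) else 0) = _
      rw [hoj]
  have hrow : ∀ v, πstar v i + πstar v j = 1/(N:ℝ) := by
    intro v
    rw [(hps v).1, (hps v).2]
    rcases (hdne v).lt_or_gt with h | h
    · rw [if_pos h, if_neg (not_lt.2 h.le)]; ring
    · rw [if_neg (not_lt.2 h.le), if_pos h]; ring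
  have hrow' : ∀ v : Fin N, ∑ x ∈ ({i, j} : Finset (Fin N)), πstar v x = 1/(N:ℝ) := by
    intro v; rw [Finset.sum_pair hij]; exact hrow v
  -- the flip involution
  haveI : NeZero N := ⟨by omega⟩
  have hhalf : N/2 < N := by omega
  set h2 : Fin N := ⟨N/2, hhalf⟩ with hh2
  have hflip : ∀ (v x : Fin N), d (z (v + h2)) (θ x) = π - d (z v) (θ x) := by
    intro v x
    rw [hd, hd]
    have hval : (v + h2).1 = (v.1 + N/2) % N := rfl
    have harg : ((v + h2).1 + (N - x.1)) % N = ((v.1 + (N - x.1)) % N + N/2) % N := by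
      rw [hval, Nat.mod_add_mod, Nat.mod_add_mod]
      congr 1
      omega
    rw [harg]
    exact dvAM_half N _ hN0 hNeven (hMlt v x)
  have hswap : ∀ v, πstar (v + h2) i = πstar v j := by
    intro v
    rw [(hps (v + h2)).1, (hps v).2, hflip, hflip]
    congr 1
    rw [eq_iff_iff]
    constructor <;> intro h <;> linarith
  have hcol_i : ∑ v : Fin N, πstar v i = ∑ v : Fin N, πstar v j := by
    calc ∑ v : Fin N, πstar v i
        = ∑ v : Fin N, πstar (v + h2) i :=
          (Fintype.sum_equiv (Equiv.addRight h2) (fun v => πstar (v + h2) i)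
            (fun v => πstar v i) (fun v => rfl)).symm
      _ = ∑ v : Fin N, πstar v j := Finset.sum_congr rfl (fun v _ => hswap v)
  have hone : ∑ v : Fin N, πstar v i + ∑ v : Fin N, πstar v j = 1 := by
    rw [← Finset.sum_add_distrib]
    rw [Finset.sum_congr rfl (fun v _ => hrow v)]
    rw [Finset.sum_const, Finset.card_univ, Fintype.card_fin]
    rw [nsmul_eq_mul]
    field_simp
  have hi2 : ∑ v : Fin N, πstar v i = 1/2 := by
    rw [← hcol_i] at hone; linarith
  have hcol : ∀ x ∈ ({i, j} : Finset (Fin N)), ∑ v : Fin N, πstar v x = 1/2 := by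
    intro x hx
    rcases Finset.mem_insert.1 hx with rfl | hx'
    · exact hi2
    · rw [Finset.mem_singleton.1 hx', ← hcol_i]; exact hi2
  refine ⟨⟨?_, hrow', hcol⟩, ?_⟩
  · intro v x
    show 0 ≤ (if d (z v) (θ x) < d (z v) (θ (other x)) then 1/(N:ℝ) else 0)
    split_ifs
    · positivity
    · exact le_refl 0
  · intro π' hpos hrowc hcolc
    apply Finset.sum_le_sum
    intro v _
    rw [Finset.sum_pair hij, Finset.sum_pair hij]
    have hr := hrowc v
    rw [Finset.sum_pair hij] at hr
    have hpi := hpos v i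
    have hpj := hpos v j
    rw [(hps v).1, (hps v).2]
    rcases (hdne v).lt_or_gt with h | h
    · rw [if_pos h, if_neg (not_lt.2 h.le)]
      have key : π' v i * d (z v) (θ i) + π' v j * d (z v) (θ i)
          = 1/(N:ℝ) * d (z v) (θ i) := by rw [← add_mul, hr]
      linarith [mul_le_mul_of_nonneg_left h.le hpj, key]
    · rw [if_neg (not_lt.2 h.le), if_pos h]
      have key : π' v i * d (z v) (θ j) + π' v j * d (z v) (θ j)
          = 1/(N:ℝ) * d (z v) (θ j) := by rw [← add_mul, hr]
      linarith [mul_le_mul_of_nonneg_left h.le hpi, key]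
end
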